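/- arXiv:1901.05226 — 8 statements merged into one kernel-verified Lean document; each statement's English description precedes it below -/
import Mathlib

section
/- Let C₁ and C₂ be two string collections, each string terminated by #. Fix a string W# (W not containing #) occurring as a suffix in C₁ ∪ C₂. If ⟨L₁, R₁⟩ and ⟨L₂, R₂⟩ are the (possibly empty) ranges of W# in the generalized suffix arrays of C₁ and C₂ respectively (with the convention that L_j − 1 is the number of suffixes of C_j smaller than W# even when the range is empty), then the range of W# in the generalized suffix array of C₁ ∪ C₂ (suffixes of C₁ preceding suffixes of C₂ on ties) is ⟨L₁ + L₂ − 1, R₁ + R₂⟩, and within this range the first R₁ − L₁ + 1 positions correspond to suffixes from C₁. -/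
/-!
Order the merged array lexicographically by suffix and then by tag, `false < true`; the
sortedness hypothesis says exactly that the array is monotone for this order. Hence for every
lower set `T` the positions holding an element of `T` form an initial segment `[1, N]`, and
since every position carries exactly one suffix of `C₁` or of `C₂`, `N` is the number of
suffixes of `C₁` tagged `false` in `T` plus the number of suffixes of `C₂` tagged `true` in `T`.
For `w = W#`, the lower sets `< (w, false)`, `≤ (w, false)` and `≤ (w, true)` give the segments
`[1, L₁ + L₂ - 2]`, `[1, R₁ + L₂ - 1]` and `[1, R₁ + R₂]`; their successive differences are the
range of `w`, split into its `C₁` part and its `C₂` part.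
-/

open Set

theorem eq_Icc_one_ncard_of_Icc_subset {P : Set ℕ} (hfin : P.Finite) (h0 : 0 ∉ P)
    (hdown : ∀ i ∈ P, Icc 1 i ⊆ P) : P = Icc 1 P.ncard := by
  have hcard : ∀ k, (Icc 1 k).ncard = k := fun k => by simp
  refine eq_of_subset_of_ncard_le (fun i hi => ⟨?_, ?_⟩) (by rw [hcard]) (finite_Icc _ _)
  · exact Nat.one_le_iff_ne_zero.2 fun h => h0 (h ▸ hi)
  · simpa only [hcard] using ncard_le_ncard (hdown i hi) hfin

theorem sep_Icc_eq_Icc_ncard_of_monotoneOn {β : Type*} [Preorder β] {f : ℕ → β} {n : ℕ}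
    (hf : MonotoneOn f (Icc 1 n)) {T : Set β} (hT : IsLowerSet T) :
    {i ∈ Icc 1 n | f i ∈ T} = Icc 1 {i ∈ Icc 1 n | f i ∈ T}.ncard := by
  refine eq_Icc_one_ncard_of_Icc_subset ((finite_Icc 1 n).sep _) (fun h => by simp at h) ?_
  rintro i ⟨hi, hfi⟩ j hj
  have hj' : j ∈ Icc 1 n := ⟨hj.1, hj.2.trans hi.2⟩
  exact ⟨hj', hT (hf hj' hi hj.2) hfi⟩

theorem Set.MapsTo.injOn_of_existsUnique_or {ι₁ ι₂ κ : Type*} {g₁ : ι₁ → κ} {g₂ : ι₂ → κ}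
    {D₁ : Set ι₁} {D₂ : Set ι₂} {I : Set κ} (hmaps : MapsTo g₁ D₁ I)
    (hdisj : ∀ p ∈ D₁, ∀ q ∈ D₂, g₁ p ≠ g₂ q)
    (huniq : ∀ i ∈ I, (∃! p, p ∈ D₁ ∧ g₁ p = i) ∨ (∃! q, q ∈ D₂ ∧ g₂ q = i)) :
    InjOn g₁ D₁ := by
  intro p hp p' hp' hpp'
  rcases huniq _ (hmaps hp) with ⟨r, -, hr⟩ | ⟨q, ⟨hq, hqp⟩, -⟩
  · exact (hr p ⟨hp, rfl⟩).trans (hr p' ⟨hp', hpp'.symm⟩).symm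
  · exact absurd hqp.symm (hdisj p hp q hq)

theorem ncard_sep_eq_add_of_injOn {ι₁ ι₂ κ : Type*} {g₁ : ι₁ → κ} {g₂ : ι₂ → κ}
    {D₁ : Set ι₁} {D₂ : Set ι₂} {I : Set κ} (hI : I.Finite) (h₁ : InjOn g₁ D₁)
    (h₂ : InjOn g₂ D₂) (hdisj : Disjoint (g₁ '' D₁) (g₂ '' D₂))
    (hcover : g₁ '' D₁ ∪ g₂ '' D₂ = I) (P : κ → Prop) :
    {i ∈ I | P i}.ncard = {p ∈ D₁ | P (g₁ p)}.ncard + {p ∈ D₂ | P (g₂ p)}.ncard := by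
  have hsplit : {i ∈ I | P i} = g₁ '' {p ∈ D₁ | P (g₁ p)} ∪ g₂ '' {p ∈ D₂ | P (g₂ p)} := by
    ext i
    simp only [← hcover, mem_sep_iff, mem_union, mem_image]
    grind
  have hsub₁ : g₁ '' {p ∈ D₁ | P (g₁ p)} ⊆ I :=
    hcover ▸ subset_union_of_subset_left (image_mono (sep_subset _ _)) _
  have hsub₂ : g₂ '' {p ∈ D₂ | P (g₂ p)} ⊆ I :=
    hcover ▸ subset_union_of_subset_right (image_mono (sep_subset _ _)) _
  rw [hsplit, ncard_union_eq (hdisj.mono (image_mono (sep_subset _ _)) (image_mono (sep_subset _ _)))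
      (hI.subset hsub₁) (hI.subset hsub₂), (h₁.mono (sep_subset _ _)).ncard_image,
    (h₂.mono (sep_subset _ _)).ncard_image]

theorem Prod.Lex.toLex_lt_toLex_false {β : Type*} [Preorder β] {x : β × Bool} {b : β} :
    toLex x < toLex (b, false) ↔ x.1 < b := by
  simp [Prod.Lex.toLex_lt_toLex, Bool.lt_iff]

theorem Prod.Lex.toLex_le_toLex_false {β : Type*} [Preorder β] {x : β × Bool} {b : β} :
    toLex x ≤ toLex (b, false) ↔ x.1 < b ∨ x.1 = b ∧ x.2 = false := by
  simp [Prod.Lex.toLex_le_toLex, Bool.le_iff_imp]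

theorem Prod.Lex.toLex_le_toLex_true {β : Type*} [Preorder β] {x : β × Bool} {b : β} :
    toLex x ≤ toLex (b, true) ↔ x.1 < b ∨ x.1 = b := by
  simp [Prod.Lex.toLex_le_toLex, Bool.le_iff_imp]

theorem monotoneOn_toLex_of_sorted {β : Type*} [Preorder β] {S : ℕ → β × Bool} {n : ℕ}
    (hsorted : ∀ i i', 1 ≤ i → i < i' → i' ≤ n →
      (S i).1 < (S i').1 ∨ ((S i).1 = (S i').1 ∧ ¬((S i).2 = true ∧ (S i').2 = false))) :
    MonotoneOn (fun i => toLex (S i)) (Icc 1 n) := by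
  intro i hi i' hi' hle
  rcases hle.eq_or_lt with rfl | hlt
  · exact le_rfl
  · simpa [Prod.Lex.toLex_le_toLex, Bool.le_iff_imp] using hsorted i i' hi.1 hlt hi'.2

/-- Index `(j, k)` stands for the suffix of `C j` starting at its `k`-th letter (1-based). -/
def suffixIndices {α : Type*} {m : ℕ} (C : Fin m → List α) : Set (Fin m × ℕ) :=
  {p | 1 ≤ p.2 ∧ p.2 ≤ (C p.1).length}

def suffixesWith {α : Type*} {m : ℕ} (C : Fin m → List α) (Q : List α → Prop) :
    Set (Fin m × ℕ) :=
  {p | 1 ≤ p.2 ∧ p.2 ≤ (C p.1).length ∧ Q ((C p.1).drop (p.2 - 1))}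

section Suffixes

variable {α : Type*} {m : ℕ} (C : Fin m → List α)

theorem finite_suffixesWith (Q : List α → Prop) : (suffixesWith C Q).Finite := by
  refine (finite_univ.prod (finite_Iic (∑ j, (C j).length))).subset fun p hp => ⟨trivial, ?_⟩
  exact hp.2.1.trans (Finset.single_le_sum (f := fun j => (C j).length) (fun _ _ => Nat.zero_le _)
    (Finset.mem_univ p.1))

theorem ncard_suffixesWith_or {P Q : List α → Prop} (hPQ : ∀ x, P x → ¬Q x) :
    (suffixesWith C fun x => P x ∨ Q x).ncard =
      (suffixesWith C P).ncard + (suffixesWith C Q).ncard := by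
  have hunion : (suffixesWith C fun x => P x ∨ Q x) = suffixesWith C P ∪ suffixesWith C Q := by
    ext p
    simp only [suffixesWith, mem_ofPred_eq, mem_union]
    tauto
  rw [hunion, ncard_union_eq _ (finite_suffixesWith C P) (finite_suffixesWith C Q)]
  exact disjoint_left.2 fun p hP hQ => hPQ _ hP.2.2 hQ.2.2

theorem sep_suffixIndices_eq_suffixesWith {κ β : Type*} {g : Fin m × ℕ → κ}
    {S : κ → List α × β} {b : β}
    (hS : ∀ p ∈ suffixIndices C, S (g p) = ((C p.1).drop (p.2 - 1), b))
    (Q : List α × β → Prop) :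
    {p ∈ suffixIndices C | Q (S (g p))} = suffixesWith C fun x => Q (x, b) := by
  ext p
  refine and_assoc.trans (and_congr_right fun h => and_congr_right fun h' => ?_)
  rw [hS p ⟨h, h'⟩]

end Suffixes

theorem ncard_sep_Icc_eq_ncard_suffixesWith_add {α : Type*} {m₁ m₂ n : ℕ}
    {C₁ : Fin m₁ → List α} {C₂ : Fin m₂ → List α} {S : ℕ → List α × Bool}
    {pos₁ : Fin m₁ → ℕ → ℕ} {pos₂ : Fin m₂ → ℕ → ℕ}
    (hpos₁ : ∀ j k, 1 ≤ k → k ≤ (C₁ j).length →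
      1 ≤ pos₁ j k ∧ pos₁ j k ≤ n ∧ S (pos₁ j k) = ((C₁ j).drop (k - 1), false))
    (hpos₂ : ∀ j k, 1 ≤ k → k ≤ (C₂ j).length →
      1 ≤ pos₂ j k ∧ pos₂ j k ≤ n ∧ S (pos₂ j k) = ((C₂ j).drop (k - 1), true))
    (hinj : ∀ i, 1 ≤ i → i ≤ n →
      (∃! p : Fin m₁ × ℕ, 1 ≤ p.2 ∧ p.2 ≤ (C₁ p.1).length ∧ pos₁ p.1 p.2 = i) ∨
      (∃! p : Fin m₂ × ℕ, 1 ≤ p.2 ∧ p.2 ≤ (C₂ p.1).length ∧ pos₂ p.1 p.2 = i))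
    (hdisj : ∀ j k j' k', 1 ≤ k → k ≤ (C₁ j).length → 1 ≤ k' → k' ≤ (C₂ j').length →
      pos₁ j k ≠ pos₂ j' k')
    (Q : List α × Bool → Prop) :
    {i ∈ Icc 1 n | Q (S i)}.ncard =
      (suffixesWith C₁ fun x => Q (x, false)).ncard +
        (suffixesWith C₂ fun x => Q (x, true)).ncard := by
  set g₁ : Fin m₁ × ℕ → ℕ := fun p => pos₁ p.1 p.2
  set g₂ : Fin m₂ × ℕ → ℕ := fun p => pos₂ p.1 p.2
  have hmaps₁ : MapsTo g₁ (suffixIndices C₁) (Icc 1 n) := fun p hp =>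
    ⟨(hpos₁ _ _ hp.1 hp.2).1, (hpos₁ _ _ hp.1 hp.2).2.1⟩
  have hmaps₂ : MapsTo g₂ (suffixIndices C₂) (Icc 1 n) := fun p hp =>
    ⟨(hpos₂ _ _ hp.1 hp.2).1, (hpos₂ _ _ hp.1 hp.2).2.1⟩
  have hdisj' : ∀ p ∈ suffixIndices C₁, ∀ q ∈ suffixIndices C₂, g₁ p ≠ g₂ q :=
    fun p hp q hq => hdisj _ _ _ _ hp.1 hp.2 hq.1 hq.2
  have huniq : ∀ i ∈ Icc 1 n, (∃! p, p ∈ suffixIndices C₁ ∧ g₁ p = i) ∨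
      (∃! q, q ∈ suffixIndices C₂ ∧ g₂ q = i) := fun i hi => by
    simpa only [suffixIndices, mem_ofPred_eq, and_assoc] using hinj i hi.1 hi.2
  have hcover : g₁ '' suffixIndices C₁ ∪ g₂ '' suffixIndices C₂ = Icc 1 n := by
    refine subset_antisymm (union_subset hmaps₁.image_subset hmaps₂.image_subset) fun i hi => ?_
    rcases huniq i hi with ⟨p, hp, -⟩ | ⟨q, hq, -⟩
    exacts [Or.inl ⟨p, hp⟩, Or.inr ⟨q, hq⟩]
  rw [ncard_sep_eq_add_of_injOn (finite_Icc 1 n) (hmaps₁.injOn_of_existsUnique_or hdisj' huniq)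
      (hmaps₂.injOn_of_existsUnique_or (fun q hq p hp h => hdisj' p hp q hq h.symm)
        fun i hi => (huniq i hi).symm)
      (disjoint_left.2 fun _ ⟨p, hp, hpi⟩ ⟨q, hq, hqi⟩ => hdisj' p hp q hq (hpi.trans hqi.symm))
      hcover,
    sep_suffixIndices_eq_suffixesWith C₁ (fun p hp => (hpos₁ _ _ hp.1 hp.2).2.2),
    sep_suffixIndices_eq_suffixesWith C₂ (fun p hp => (hpos₂ _ _ hp.1 hp.2).2.2)]

theorem merged_range_of_terminated_suffix_general {α : Type*} [LinearOrder α]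
    (m₁ m₂ : ℕ) (C₁ : Fin m₁ → List α) (C₂ : Fin m₂ → List α) (hash : α) (n : ℕ)
    (W : List α)
    (L₁ R₁ L₂ R₂ : ℕ)
    (hL₁ : L₁ = Set.ncard {p : Fin m₁ × ℕ | 1 ≤ p.2 ∧ p.2 ≤ (C₁ p.1).length ∧
      (C₁ p.1).drop (p.2 - 1) < W ++ [hash]} + 1)
    (hR₁ : R₁ = L₁ - 1 + Set.ncard {p : Fin m₁ × ℕ | 1 ≤ p.2 ∧ p.2 ≤ (C₁ p.1).length ∧
      (C₁ p.1).drop (p.2 - 1) = W ++ [hash]})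
    (hL₂ : L₂ = Set.ncard {p : Fin m₂ × ℕ | 1 ≤ p.2 ∧ p.2 ≤ (C₂ p.1).length ∧
      (C₂ p.1).drop (p.2 - 1) < W ++ [hash]} + 1)
    (hR₂ : R₂ = L₂ - 1 + Set.ncard {p : Fin m₂ × ℕ | 1 ≤ p.2 ∧ p.2 ≤ (C₂ p.1).length ∧
      (C₂ p.1).drop (p.2 - 1) = W ++ [hash]})
    -- the merged generalized suffix array, with tag `false` for suffixes of C₁ :
    (S : ℕ → List α × Bool) (pos₁ : Fin m₁ → ℕ → ℕ) (pos₂ : Fin m₂ → ℕ → ℕ)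
    (hpos₁ : ∀ j k, 1 ≤ k → k ≤ (C₁ j).length →
      1 ≤ pos₁ j k ∧ pos₁ j k ≤ n ∧ S (pos₁ j k) = ((C₁ j).drop (k - 1), false))
    (hpos₂ : ∀ j k, 1 ≤ k → k ≤ (C₂ j).length →
      1 ≤ pos₂ j k ∧ pos₂ j k ≤ n ∧ S (pos₂ j k) = ((C₂ j).drop (k - 1), true))
    (hinj : ∀ i, 1 ≤ i → i ≤ n →
      (∃! p : Fin m₁ × ℕ, 1 ≤ p.2 ∧ p.2 ≤ (C₁ p.1).length ∧ pos₁ p.1 p.2 = i) ∨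
      (∃! p : Fin m₂ × ℕ, 1 ≤ p.2 ∧ p.2 ≤ (C₂ p.1).length ∧ pos₂ p.1 p.2 = i))
    (hdisj : ∀ j k j' k', 1 ≤ k → k ≤ (C₁ j).length → 1 ≤ k' → k' ≤ (C₂ j').length →
      pos₁ j k ≠ pos₂ j' k')
    (hsorted : ∀ i i', 1 ≤ i → i < i' → i' ≤ n →
      (S i).1 < (S i').1 ∨ ((S i).1 = (S i').1 ∧ ¬((S i).2 = true ∧ (S i').2 = false))) :
    (∀ i, 1 ≤ i → i ≤ n → ((S i).1 = W ++ [hash] ↔ (L₁ + L₂ - 1 ≤ i ∧ i ≤ R₁ + R₂))) ∧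
    (∀ i, L₁ + L₂ - 1 ≤ i → i ≤ L₂ + R₁ - 1 → (S i).2 = false) ∧
    (∀ i, L₂ + R₁ ≤ i → i ≤ R₁ + R₂ → (S i).2 = true) := by
  set w := W ++ [hash]
  have hsegment : ∀ T : Set (Lex (List α × Bool)), IsLowerSet T →
      {i ∈ Icc 1 n | toLex (S i) ∈ T} = Icc 1
        ((suffixesWith C₁ fun x => toLex (x, false) ∈ T).ncard +
          (suffixesWith C₂ fun x => toLex (x, true) ∈ T).ncard) := fun T hT => by
    rw [sep_Icc_eq_Icc_ncard_of_monotoneOn (monotoneOn_toLex_of_sorted hsorted) hT,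
      ncard_sep_Icc_eq_ncard_suffixesWith_add hpos₁ hpos₂ hinj hdisj (toLex · ∈ T)]
  have hlt := hsegment _ (isLowerSet_Iio (toLex (w, false)))
  have hle := hsegment _ (isLowerSet_Iic (toLex (w, true)))
  have hfst := hsegment _ (isLowerSet_Iic (toLex (w, false)))
  simp only [mem_Iio, mem_Iic, Prod.Lex.toLex_lt_toLex_false, Prod.Lex.toLex_le_toLex_false,
    Prod.Lex.toLex_le_toLex_true, and_true, Bool.true_eq_false, and_false, or_false] at hlt hle hfst
  have hne : ∀ x : List α, x < w → ¬x = w := fun _ h => h.ne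
  rw [ncard_suffixesWith_or C₁ (P := (· < w)) (Q := (· = w)) hne] at hle hfst
  rw [ncard_suffixesWith_or C₂ (P := (· < w)) (Q := (· = w)) hne] at hle
  change L₁ = (suffixesWith C₁ (· < w)).ncard + 1 at hL₁
  change L₂ = (suffixesWith C₂ (· < w)).ncard + 1 at hL₂
  change R₁ = L₁ - 1 + (suffixesWith C₁ (· = w)).ncard at hR₁
  change R₂ = L₂ - 1 + (suffixesWith C₂ (· = w)).ncard at hR₂
  simp only [Set.ext_iff, mem_ofPred_eq, mem_Icc] at hlt hle hfst
  refine ⟨fun i _ _ => ?_, fun i _ _ => ?_, fun i _ _ => ?_⟩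
  · grind [hlt i, hle i]
  · grind [hlt i, hfst i]
  · grind [hle i, hfst i]

/-- Let `C₁`, `C₂` be collections of `#`-terminated strings and `W#`
(`#` not in `W`) a suffix occurring in their union. If `⟨L₁,R₁⟩`, `⟨L₂,R₂⟩` are the
(possibly empty) ranges of `W#` in the generalized suffix arrays of `C₁`, `C₂`
(with `Lⱼ - 1` = number of suffixes of `Cⱼ` smaller than `W#`, and `Rⱼ - Lⱼ + 1` =
number of suffixes equal to `W#`), then in the generalized suffix array `S` of
`C₁ ∪ C₂` (ties broken with `C₁` before `C₂`, tags: `false` = from `C₁`) the range of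
`W#` is `⟨L₁+L₂-1, R₁+R₂⟩`, and its first `R₁-L₁+1` positions carry suffixes of `C₁`. -/
theorem merged_range_of_terminated_suffix {α : Type*} [LinearOrder α]
    (m₁ m₂ : ℕ) (C₁ : Fin m₁ → List α) (C₂ : Fin m₂ → List α) (hash : α) (n : ℕ)
    (hC₁ne : ∀ j, C₁ j ≠ []) (hC₂ne : ∀ j, C₂ j ≠ [])
    (hlast₁ : ∀ j, (C₁ j).getLast (hC₁ne j) = hash)
    (hlast₂ : ∀ j, (C₂ j).getLast (hC₂ne j) = hash)
    (honce₁ : ∀ j, hash ∉ (C₁ j).dropLast)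
    (honce₂ : ∀ j, hash ∉ (C₂ j).dropLast)
    (hmin : ∀ a : α, a ≠ hash → hash < a)
    (hn : n = (∑ j, (C₁ j).length) + ∑ j, (C₂ j).length)
    (W : List α) (hWhash : hash ∉ W)
    (hWocc : (∃ j, (W ++ [hash]) <:+ C₁ j) ∨ (∃ j, (W ++ [hash]) <:+ C₂ j))
    (L₁ R₁ L₂ R₂ : ℕ)
    (hL₁ : L₁ = Set.ncard {p : Fin m₁ × ℕ | 1 ≤ p.2 ∧ p.2 ≤ (C₁ p.1).length ∧
      (C₁ p.1).drop (p.2 - 1) < W ++ [hash]} + 1)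
    (hR₁ : R₁ = L₁ - 1 + Set.ncard {p : Fin m₁ × ℕ | 1 ≤ p.2 ∧ p.2 ≤ (C₁ p.1).length ∧
      (C₁ p.1).drop (p.2 - 1) = W ++ [hash]})
    (hL₂ : L₂ = Set.ncard {p : Fin m₂ × ℕ | 1 ≤ p.2 ∧ p.2 ≤ (C₂ p.1).length ∧
      (C₂ p.1).drop (p.2 - 1) < W ++ [hash]} + 1)
    (hR₂ : R₂ = L₂ - 1 + Set.ncard {p : Fin m₂ × ℕ | 1 ≤ p.2 ∧ p.2 ≤ (C₂ p.1).length ∧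
      (C₂ p.1).drop (p.2 - 1) = W ++ [hash]})
    -- the merged generalized suffix array, with tag `false` for suffixes of C₁ :
    (S : ℕ → List α × Bool) (pos₁ : Fin m₁ → ℕ → ℕ) (pos₂ : Fin m₂ → ℕ → ℕ)
    (hpos₁ : ∀ j k, 1 ≤ k → k ≤ (C₁ j).length →
      1 ≤ pos₁ j k ∧ pos₁ j k ≤ n ∧ S (pos₁ j k) = ((C₁ j).drop (k - 1), false))
    (hpos₂ : ∀ j k, 1 ≤ k → k ≤ (C₂ j).length →
      1 ≤ pos₂ j k ∧ pos₂ j k ≤ n ∧ S (pos₂ j k) = ((C₂ j).drop (k - 1), true))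
    (hinj : ∀ i, 1 ≤ i → i ≤ n →
      (∃! p : Fin m₁ × ℕ, 1 ≤ p.2 ∧ p.2 ≤ (C₁ p.1).length ∧ pos₁ p.1 p.2 = i) ∨
      (∃! p : Fin m₂ × ℕ, 1 ≤ p.2 ∧ p.2 ≤ (C₂ p.1).length ∧ pos₂ p.1 p.2 = i))
    (hdisj : ∀ j k j' k', 1 ≤ k → k ≤ (C₁ j).length → 1 ≤ k' → k' ≤ (C₂ j').length →
      pos₁ j k ≠ pos₂ j' k')
    (hsorted : ∀ i i', 1 ≤ i → i < i' → i' ≤ n →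
      (S i).1 < (S i').1 ∨ ((S i).1 = (S i').1 ∧ ¬((S i).2 = true ∧ (S i').2 = false))) :
    (∀ i, 1 ≤ i → i ≤ n → ((S i).1 = W ++ [hash] ↔ (L₁ + L₂ - 1 ≤ i ∧ i ≤ R₁ + R₂))) ∧
    (∀ i, L₁ + L₂ - 1 ≤ i → i ≤ L₂ + R₁ - 1 → (S i).2 = false) ∧
    (∀ i, L₂ + R₁ ≤ i → i ≤ R₁ + R₂ → (S i).2 = true) :=
  merged_range_of_terminated_suffix_general m₁ m₂ C₁ C₂ hash n W L₁ R₁ L₂ R₂ hL₁ hR₁ hL₂ hR₂ S pos₁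
    pos₂ hpos₁ hpos₂ hinj hdisj hsorted
end

section
/- Let T be a #-terminated string and suppose LCP[i] = ℓ + 1 ≥ 2 for some position i > 1 of the LCP array of T, where the suffix at position i starts with a·b·V for characters a, b and a string V with |bV| = ℓ + 1 being a prefix realizing the LCP. Then LCP[right(bV) + 1] = ℓ, where right(bV) is the last position of the suffix-array range of bV. -/
/-! The suffixes at positions `i - 1` and `i` agree exactly on `a X`, where `b :: V = X ++ [v]`,
so they read `a X v …` and `a X c …` with `v < c`. Dropping `a` from the latter gives a suffix
`X c …` that sorts after every suffix starting with `b :: V = X ++ [v]` and shares exactly `ℓ`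
characters with each of them. The successor of the last suffix `S r` starting with `b :: V` lies
between `S r` and `X c …`, so its LCP with `S r` is at least `ℓ`; it is at most `ℓ` because the
successor no longer starts with `b :: V`. -/

/-- Length of the longest common prefix of two lists. -/
def lcpLen {α : Type*} [DecidableEq α] : List α → List α → ℕ
  | a :: as, b :: bs => if a = b then lcpLen as bs + 1 else 0
  | _, _ => 0

section
variable {α : Type*}

section DecidableEq
variable [DecidableEq α]

@[simp]
theorem lcpLen_nil_left (y : List α) : lcpLen [] y = 0 := by
  cases y <;> rfl

@[simp]
theorem lcpLen_nil_right (x : List α) : lcpLen x [] = 0 := by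
  cases x <;> rfl

@[simp]
theorem lcpLen_cons_cons (a b : α) (x y : List α) :
    lcpLen (a :: x) (b :: y) = if a = b then lcpLen x y + 1 else 0 := rfl

theorem lcpLen_append_left (p x y : List α) :
    lcpLen (p ++ x) (p ++ y) = p.length + lcpLen x y := by
  induction p with
  | nil => simp
  | cons a p ih => simp [ih]; omega

theorem lcpLen_append_cons_of_ne {v c : α} (h : v ≠ c) (p x y : List α) :
    lcpLen (p ++ v :: x) (p ++ c :: y) = p.length := by
  simp [lcpLen_append_left, h]

theorem take_lcpLen_eq : ∀ x y : List α, x.take (lcpLen x y) = y.take (lcpLen x y)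
  | [], _ | _ :: _, [] => by simp
  | a :: x, b :: y => by
    by_cases h : a = b
    · simp [h, take_lcpLen_eq x y]
    · simp [h]

theorem lcpLen_lt_length_of_prefix_of_not_prefix {p x y : List α} (hx : p <+: x)
    (hy : ¬ p <+: y) : lcpLen x y < p.length := by
  by_contra! h
  refine hy (List.prefix_iff_eq_take.mpr ?_)
  calc p = x.take p.length := List.prefix_iff_eq_take.mp hx
    _ = (x.take (lcpLen x y)).take p.length := by rw [List.take_take, min_eq_left h]
    _ = y.take p.length := by rw [take_lcpLen_eq, List.take_take, min_eq_left h]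

end DecidableEq

theorem eq_append_singleton_of_prefix {l p u : List α} {v : α} (h : l <+: p ++ v :: u)
    (hl : l.length = p.length + 1) : l = p ++ [v] := by
  rw [List.prefix_iff_eq_take.mp h, hl, List.take_append]
  simp

section LinearOrder
variable [LinearOrder α]

-- Core's `List.cons_le_cons_iff` concerns core's `List.le`, which Mathlib's `LinearOrder (List α)`
-- replaces by a different (only propositionally equal) relation.
theorem cons_le_cons_iff_lex {a b : α} {x y : List α} :
    a :: x ≤ b :: y ↔ a < b ∨ a = b ∧ x ≤ y := by
  simp only [le_iff_lt_or_eq, List.cons_lt_cons_iff, List.cons.injEq]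
  tauto

theorem lcpLen_le_of_le_of_le : ∀ {x y z : List α}, x ≤ y → y ≤ z → lcpLen x z ≤ lcpLen x y
  | [], _, _, _, _ | _ :: _, _, [], _, _ => by simp
  | _ :: _, [], _ :: _, hxy, _ => by simp [le_iff_lt_or_eq] at hxy
  | a :: x, e :: y, c :: z, hxy, hyz => by
    rcases eq_or_ne c a with rfl | hac
    · rcases cons_le_cons_iff_lex.mp hxy with hce | ⟨rfl, hxy'⟩
      · rcases cons_le_cons_iff_lex.mp hyz with hec | ⟨rfl, -⟩
        · exact absurd (hce.trans hec) (lt_irrefl _)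
        · exact absurd hce (lt_irrefl _)
      · have hyz' : y ≤ z := ((cons_le_cons_iff_lex.mp hyz).resolve_left (lt_irrefl _)).2
        simpa using lcpLen_le_of_le_of_le hxy' hyz'
    · simp [hac.symm]

theorem exists_eq_append_cons_of_lt : ∀ {x y : List α}, x < y → lcpLen x y < x.length →
    ∃ p v u c w, x = p ++ v :: u ∧ y = p ++ c :: w ∧ p.length = lcpLen x y ∧ v < c
  | [], _, _, hk => by simp at hk
  | _ :: _, [], h, _ => absurd h (List.not_lt_nil _)
  | a :: x, b :: y, h, hk => by
    rcases List.cons_lt_cons_iff.mp h with hab | ⟨rfl, hxy⟩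
    · exact ⟨[], a, x, b, y, rfl, rfl, by simp [hab.ne], hab⟩
    · obtain ⟨p, v, u, c, w, rfl, rfl, hp, hvc⟩ :=
        exists_eq_append_cons_of_lt hxy (by simpa using hk)
      exact ⟨a :: p, v, u, c, w, rfl, rfl, by simp [hp], hvc⟩

theorem lcpLen_succ_eq_of_last_prefix {S : ℕ → List α} {n r m ℓ : ℕ} {X : List α}
    (hS : StrictMonoOn S (Set.Icc 1 n)) (hr : 1 ≤ r) (hrn : r < n)
    (hX : X <+: S r) (hXlen : X.length = ℓ + 1)
    (hlast : ∀ j, r < j → j ≤ n → ¬ X <+: S j)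
    (hm : m ∈ Set.Icc 1 n) (hrm : S r < S m) (hlcp : lcpLen (S r) (S m) = ℓ) :
    lcpLen (S r) (S (r + 1)) = ℓ := by
  have hr_mem : r ∈ Set.Icc 1 n := ⟨hr, hrn.le⟩
  have hr1_mem : r + 1 ∈ Set.Icc 1 n := ⟨by omega, hrn⟩
  have hr1m : r + 1 ≤ m := (hS.lt_iff_lt hr_mem hm).mp hrm
  have hupper := lcpLen_lt_length_of_prefix_of_not_prefix hX (hlast (r + 1) (by omega) hrn)
  have hlower : lcpLen (S r) (S m) ≤ lcpLen (S r) (S (r + 1)) :=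
    lcpLen_le_of_le_of_le (hS.monotoneOn hr_mem hr1_mem (by omega))
      (hS.monotoneOn hr1_mem hm hr1m)
  omega

end LinearOrder
end

theorem lcp_of_shortened_extension_general {α : Type*} [LinearOrder α]
    (T : List α) (n : ℕ)
    (S : ℕ → List α)
    (hsuf : ∀ i, 1 ≤ i → i ≤ n → S i <:+ T ∧ S i ≠ [])
    (henum : ∀ s : List α, s <:+ T → s ≠ [] → ∃ i, 1 ≤ i ∧ i ≤ n ∧ S i = s)
    (hsorted : ∀ i j, 1 ≤ i → i < j → j ≤ n → S i < S j)
    (i ℓ : ℕ) (a b : α) (V : List α)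
    (hi1 : 1 < i) (hin : i ≤ n)
    (hV : V.length = ℓ)
    (hlcp : lcpLen (S (i - 1)) (S i) = ℓ + 1)
    (hpref : (a :: b :: V) <+: S (i - 1)) :
    ∀ r, 1 ≤ r → r < n → (b :: V) <+: S r →
      (∀ j, r < j → j ≤ n → ¬(b :: V) <+: S j) →
      lcpLen (S r) (S (r + 1)) = ℓ := by
  intro r hr hrn hbV hlast
  have hS : StrictMonoOn S (Set.Icc 1 n) := fun j hj k hk hjk => hsorted j k hj.1 hjk hk.2
  obtain ⟨p, v, u, c, w, hSi₁, hSi, hp, hvc⟩ :=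
    exists_eq_append_cons_of_lt (hsorted (i - 1) i (by omega) (by omega) hin)
      (by have := hpref.length_le; simp only [List.length_cons] at this; omega)
  obtain ⟨X, rfl, hbVX⟩ : ∃ X, p = a :: X ∧ b :: V = X ++ [v] := by
    have habV := eq_append_singleton_of_prefix (hSi₁ ▸ hpref) (by simp [hp, hlcp, hV])
    cases p with
    | nil => simp at habV
    | cons a' X =>
      obtain ⟨rfl, hbVX⟩ := List.cons.inj habV
      exact ⟨X, rfl, hbVX⟩
  have hSiT : a :: (X ++ c :: w) <:+ T := by simpa [hSi] using (hsuf i (by omega) hin).1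
  obtain ⟨m, hm, hmn, hSm⟩ := henum (X ++ c :: w) ((List.suffix_cons a _).trans hSiT) (by simp)
  obtain ⟨z, hSr⟩ : ∃ z, S r = X ++ v :: z := by
    obtain ⟨z, hz⟩ := hbV
    exact ⟨z, by rw [← hz, hbVX]; simp⟩
  refine lcpLen_succ_eq_of_last_prefix hS hr hrn hbV (by simp [hV]) hlast ⟨hm, hmn⟩ ?_ ?_
  · rw [hSr, hSm]; exact List.append_left_lt (List.cons_lt_cons_iff.mpr (Or.inl hvc))
  · rw [hSr, hSm, lcpLen_append_cons_of_ne hvc.ne]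
    simpa [hlcp] using hp

/-- Let `T` be a `#`-terminated string with sorted suffix enumeration `S` and
`LCP[i] = lcpLen (S (i-1)) (S i)`. Suppose `LCP[i] = ℓ + 1 ≥ 2`, and `abV` (with
`|bV| = ℓ+1`, i.e. `|V| = ℓ`) is a prefix of the suffix at position `i-1` whose range ends
at `i - 1` (i.e. `right(abV) + 1 = i`). Then `LCP[right(bV) + 1] = ℓ`, where `right(bV)`
is the last position of the suffix-array range of `bV`. -/
theorem lcp_of_shortened_extension {α : Type*} [LinearOrder α]
    (T : List α) (hash : α) (n : ℕ)
    (hn : T.length = n)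
    (hne : T ≠ [])
    (hlast : T.getLast hne = hash)
    (honce : hash ∉ T.dropLast)
    (hmin : ∀ a : α, a ≠ hash → hash < a)
    (S : ℕ → List α)
    (hsuf : ∀ i, 1 ≤ i → i ≤ n → S i <:+ T ∧ S i ≠ [])
    (henum : ∀ s : List α, s <:+ T → s ≠ [] → ∃ i, 1 ≤ i ∧ i ≤ n ∧ S i = s)
    (hsorted : ∀ i j, 1 ≤ i → i < j → j ≤ n → S i < S j)
    (i ℓ : ℕ) (a b : α) (V : List α)
    (hi1 : 1 < i) (hin : i ≤ n)
    (hℓ : 1 ≤ ℓ) (hV : V.length = ℓ)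
    (hlcp : lcpLen (S (i - 1)) (S i) = ℓ + 1)
    (hpref : (a :: b :: V) <+: S (i - 1))
    (hright : ∀ j, i ≤ j → j ≤ n → ¬(a :: b :: V) <+: S j) :
    ∀ r, 1 ≤ r → r < n → (b :: V) <+: S r →
      (∀ j, r < j → j ≤ n → ¬(b :: V) <+: S j) →
      lcpLen (S r) (S (r + 1)) = ℓ :=
  lcp_of_shortened_extension_general T n S hsuf henum hsorted i ℓ a b V hi1 hin hV hlcp hpref
end

section
/- Let T be a #-terminated string of length n. The number of pairs (c, W) such that W is a right-maximal substring of T and cW occurs in T is at most 2n; more precisely, the total number of distinct left-extensions cWa over all right-maximal W and all right-extensions Wa of W (i.e., the number of implicit and explicit Weiner links) is O(n). -/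
/-- `W` is right-maximal in `T`: at least two distinct right-extensions of `W` occur. -/
def RightMaximal {α : Type*} (T W : List α) : Prop :=
  ∃ a b : α, a ≠ b ∧ (W ++ [a]) <:+: T ∧ (W ++ [b]) <:+: T

section Aux
variable {α : Type*} [LinearOrder α]

/-- The set of right-extension characters of `X` in `S`. -/
def RCs (S X : List α) : Finset α := S.toFinset.filter (fun a => (X ++ [a]) <:+: S)

lemma mem_RCs {S X : List α} {a : α} : a ∈ RCs S X ↔ (X ++ [a]) <:+: S := by
  constructor
  · exact fun h => (Finset.mem_filter.mp h).2
  · intro h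
    exact Finset.mem_filter.mpr ⟨List.mem_toFinset.mpr (h.subset (by simp)), h⟩

/-- Extend `X` to the right by the minimal extension character, `k` times (or until stuck). -/
def chainF (S : List α) : ℕ → List α → List α
  | 0, X => X
  | k+1, X =>
    if h : (RCs S X).Nonempty then chainF S k (X ++ [(RCs S X).min' h]) else X

lemma chainF_prefix (S : List α) (k : ℕ) (X : List α) : X <+: chainF S k X := by
  induction k generalizing X with
  | zero => exact List.prefix_rfl
  | succ k ih =>
    rw [chainF]
    split
    · exact (List.prefix_append X _).trans (ih _)
    · exact List.prefix_rfl

lemma chainF_infix (S : List α) (k : ℕ) (X : List α) (h : X <:+: S) :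
    chainF S k X <:+: S := by
  induction k generalizing X with
  | zero => exact h
  | succ k ih =>
    rw [chainF]
    split
    · rename_i hne
      exact ih _ (mem_RCs.mp ((RCs S X).min'_mem hne))
    · exact h

lemma chainF_dead (S : List α) (k : ℕ) (X : List α) (h : X <:+: S)
    (hk : S.length ≤ X.length + k) : RCs S (chainF S k X) = ∅ := by
  induction k generalizing X with
  | zero =>
    rw [chainF]
    by_contra hne
    obtain ⟨a, ha⟩ := Finset.nonempty_iff_ne_empty.mpr hne
    have := (mem_RCs.mp ha).length_le
    simp at this
    omega
  | succ k ih =>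
    rw [chainF]
    split
    · rename_i hne
      exact ih _ (mem_RCs.mp ((RCs S X).min'_mem hne)) (by simp; omega)
    · rename_i hne
      exact Finset.not_nonempty_iff_eq_empty.mp hne

lemma chainF_step (S : List α) (k : ℕ) (X Y : List α) (h1 : X <+: Y)
    (h2 : Y <+: chainF S k X) (h3 : Y.length < (chainF S k X).length) :
    ∃ hne : (RCs S Y).Nonempty, Y ++ [(RCs S Y).min' hne] <+: chainF S k X := by
  induction k generalizing X with
  | zero =>
    exfalso
    rw [chainF] at h2 h3
    have := h1.length_le
    have := h2.length_le
    omega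
  | succ k ih =>
    by_cases hne : (RCs S X).Nonempty
    · rw [chainF, dif_pos hne] at h2 h3 ⊢
      rcases lt_or_ge X.length Y.length with hlen | hlen
      · have hX' : X ++ [(RCs S X).min' hne] <+: Y := by
          refine List.prefix_of_prefix_length_le ?_ h2 ?_
          · exact chainF_prefix S k _
          · simp; omega
        exact ih _ hX' h2 h3
      · have hXY : Y = X := h1.eq_of_length ((le_antisymm h1.length_le hlen)) |>.symm
        subst hXY
        exact ⟨hne, chainF_prefix S k _⟩
    · exfalso
      rw [chainF, dif_neg hne] at h2 h3
      have := h1.length_le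
      have := h2.length_le
      omega

/-- Pairs `(a, V)`: `V` right-maximal, `Va` occurs, and `a` is not the minimal extension. -/
def Dset (S : List α) : Set (α × List α) :=
  {p | RightMaximal S p.2 ∧ (p.2 ++ [p.1]) <:+: S ∧ ∃ b, (p.2 ++ [b]) <:+: S ∧ b < p.1}

/-- Nonempty suffixes of `S`. -/
def TGTs (S : List α) : Set (List α) := {Z | Z ≠ [] ∧ Z <:+ S}

lemma TGT_subset (S : List α) :
    TGTs S ⊆ ↑((Finset.range S.length).image (fun i => S.drop i)) := by
  rintro Z ⟨hZne, t, rfl⟩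
  simp only [Finset.coe_image, Set.mem_image, Finset.mem_coe, Finset.mem_range]
  refine ⟨t.length, ?_, List.drop_left⟩
  have : Z.length ≠ 0 := fun h => hZne (List.eq_nil_of_length_eq_zero h)
  simp only [List.length_append]
  omega

lemma TGT_finite (S : List α) : (TGTs S).Finite :=
  Set.Finite.subset (Finset.finite_toSet _) (TGT_subset S)

lemma TGT_ncard (S : List α) : (TGTs S).ncard ≤ S.length := by
  calc (TGTs S).ncard ≤ (↑((Finset.range S.length).image (fun i => S.drop i)) : Set (List α)).ncard :=
        Set.ncard_le_ncard (TGT_subset S) (Finset.finite_toSet _)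
    _ = ((Finset.range S.length).image (fun i => S.drop i)).card := Set.ncard_coe_finset _
    _ ≤ (Finset.range S.length).card := Finset.card_image_le
    _ = S.length := Finset.card_range _

lemma chain_mem_TGT (S : List α) {p : α × List α} (hp : p ∈ Dset S) :
    chainF S S.length (p.2 ++ [p.1]) ∈ TGTs S := by
  obtain ⟨-, hinf, -⟩ := hp
  set X := p.2 ++ [p.1] with hX
  set Z := chainF S S.length X with hZ
  have hZinf : Z <:+: S := chainF_infix S S.length X hinf
  have hdead : RCs S Z = ∅ := chainF_dead S S.length X hinf (by omega)
  have hpre : X <+: Z := chainF_prefix S S.length X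
  constructor
  · intro h
    rw [h] at hpre
    have := hpre.length_le
    simp [hX] at this
  · obtain ⟨u, v, huv⟩ := hZinf
    cases v with
    | nil => exact ⟨u, by simpa using huv⟩
    | cons w vs =>
      exfalso
      have : (Z ++ [w]) <:+: S := ⟨u, vs, by rw [← huv]; simp⟩
      have := mem_RCs.mpr this
      rw [hdead] at this
      simp at this

lemma chain_injOn (S : List α) :
    Set.InjOn (fun p : α × List α => chainF S S.length (p.2 ++ [p.1])) (Dset S) := by
  -- auxiliary: strict length inequality leads to contradiction
  have aux : ∀ p q : α × List α, q ∈ Dset S →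
      chainF S S.length (p.2 ++ [p.1]) = chainF S S.length (q.2 ++ [q.1]) →
      (p.2 ++ [p.1]).length < (q.2 ++ [q.1]).length → False := by
    intro p q hq heq hlt
    set Xp := p.2 ++ [p.1] with hXp
    set Xq := q.2 ++ [q.1] with hXq
    set Z := chainF S S.length Xp with hZ
    have hpZ : Xp <+: Z := chainF_prefix S S.length Xp
    have hqZ : Xq <+: Z := heq ▸ chainF_prefix S S.length Xq
    have hq2Z : q.2 <+: Z := (List.prefix_append q.2 [q.1]).trans hqZ
    have hlen : Xp.length ≤ q.2.length := by
      simp only [hXp, hXq, List.length_append, List.length_singleton] at hlt ⊢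
      omega
    have h1 : Xp <+: q.2 := List.prefix_of_prefix_length_le hpZ hq2Z hlen
    have h3 : q.2.length < Z.length := lt_of_lt_of_le (by simp [hXq]) hqZ.length_le
    obtain ⟨hne, hstep⟩ := chainF_step S S.length Xp q.2 h1 hq2Z (by
      simpa [hZ] using h3)
    rw [← hZ] at hstep
    -- q.2 ++ [min'] and q.2 ++ [q.1] are prefixes of Z of the same length
    have : q.2 ++ [(RCs S q.2).min' hne] = Xq := by
      refine (List.prefix_of_prefix_length_le hstep hqZ (by simp [hXq])).eq_of_length ?_
      simp [hXq]
    have hq1 : q.1 = (RCs S q.2).min' hne := by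
      have := List.append_inj' this.symm (by simp)
      simpa using this.2
    obtain ⟨-, -, b, hbinf, hblt⟩ := hq
    have hbmem : b ∈ RCs S q.2 := mem_RCs.mpr hbinf
    have := Finset.min'_le _ b hbmem
    rw [← hq1] at this
    exact absurd (lt_of_le_of_lt this hblt) (lt_irrefl _)
  intro p hp q hq heq
  simp only at heq
  rcases lt_trichotomy (p.2 ++ [p.1]).length (q.2 ++ [q.1]).length with h | h | h
  · exact absurd (aux p q hq heq h) not_false
  · have hXeq : p.2 ++ [p.1] = q.2 ++ [q.1] := by
      have hpZ : (p.2 ++ [p.1]) <+: chainF S S.length (p.2 ++ [p.1]) :=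
        chainF_prefix S S.length _
      have hqZ : (q.2 ++ [q.1]) <+: chainF S S.length (p.2 ++ [p.1]) :=
        heq ▸ chainF_prefix S S.length _
      exact (List.prefix_of_prefix_length_le hpZ hqZ h.le).eq_of_length h
    obtain ⟨h2, h1⟩ := List.append_inj' hXeq (by simp)
    have : p.1 = q.1 := by simpa using h1
    exact Prod.ext this h2
  · exact absurd (aux q p hp heq.symm h) not_false

lemma Dset_finite (S : List α) : (Dset S).Finite :=
  Set.Finite.of_finite_image
    (Set.Finite.subset (TGT_finite S) (by
      rintro z ⟨p, hp, rfl⟩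
      exact chain_mem_TGT S hp))
    (chain_injOn S)

lemma Dset_ncard (S : List α) : (Dset S).ncard ≤ S.length :=
  le_trans
    (Set.ncard_le_ncard_of_injOn _ (fun p hp => chain_mem_TGT S hp) (chain_injOn S)
      (TGT_finite S))
    (TGT_ncard S)

lemma inj_bound {β γ : Type*} {s : Set β} {t : Set γ} (f : β → γ)
    (hm : ∀ a ∈ s, f a ∈ t) (hi : Set.InjOn f s) (ht : t.Finite) :
    s.Finite ∧ s.ncard ≤ t.ncard :=
  ⟨Set.Finite.of_finite_image (ht.subset (by rintro z ⟨a, ha, rfl⟩; exact hm a ha)) hi,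
   Set.ncard_le_ncard_of_injOn f hm hi ht⟩

lemma RM_subset (S : List α) : {W | RightMaximal S W} ⊆ Prod.snd '' Dset S := by
  rintro W ⟨a, b, hab, ha, hb⟩
  rcases hab.lt_or_gt with h | h
  · exact ⟨(b, W), ⟨⟨a, b, hab, ha, hb⟩, hb, a, ha, h⟩, rfl⟩
  · exact ⟨(a, W), ⟨⟨a, b, hab, ha, hb⟩, ha, b, hb, h⟩, rfl⟩

lemma RM_finite (S : List α) : {W | RightMaximal S W}.Finite :=
  ((Dset_finite S).image _).subset (RM_subset S)

lemma RM_ncard (S : List α) : {W | RightMaximal S W}.ncard ≤ S.length :=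
  le_trans (Set.ncard_le_ncard (RM_subset S) ((Dset_finite S).image _))
    (le_trans (Set.ncard_image_le (Dset_finite S)) (Dset_ncard S))

lemma rev_infix_cons {S X : List α} {c : α} (h : (c :: X) <:+: S) :
    (X.reverse ++ [c]) <:+: S.reverse := by
  rw [← List.reverse_cons]; exact List.reverse_infix.mpr h

/-- Edges: `W` right-maximal and `Wa` occurs. -/
def Eset (S : List α) : Set (List α × α) :=
  {e | RightMaximal S e.1 ∧ (e.1 ++ [e.2]) <:+: S}

lemma Eset_bound (S : List α) : (Eset S).Finite ∧ (Eset S).ncard ≤ 2 * S.length := by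
  classical
  set A : Set (List α × α) := {e | ∃ b, (e.1 ++ [b]) <:+: S ∧ b < e.2} with hA
  have h1 : (Eset S ∩ A).Finite ∧ (Eset S ∩ A).ncard ≤ (Dset S).ncard := by
    refine inj_bound (fun e => (e.2, e.1)) ?_ ?_ (Dset_finite S)
    · rintro e ⟨⟨hrm, hinf⟩, b, hbinf, hblt⟩
      exact ⟨hrm, hinf, b, hbinf, hblt⟩
    · intro e he e' he' h
      simp only [Prod.mk.injEq] at h
      exact Prod.ext h.2 h.1
  have h2 : (Eset S \ A).Finite ∧ (Eset S \ A).ncard ≤ {W | RightMaximal S W}.ncard := by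
    refine inj_bound (fun e => e.1) ?_ ?_ (RM_finite S)
    · rintro e ⟨⟨hrm, -⟩, -⟩
      exact hrm
    · rintro e ⟨⟨-, hinf⟩, hnA⟩ e' ⟨⟨-, hinf'⟩, hnA'⟩ h
      simp only at h
      simp only [hA, Set.mem_setOf_eq, not_exists, not_and] at hnA hnA'
      have hne : ¬ e'.2 < e.2 := fun hlt => hnA e'.2 (h ▸ hinf') hlt
      have hne' : ¬ e.2 < e'.2 := fun hlt => hnA' e.2 (h ▸ hinf) hlt
      exact Prod.ext h (le_antisymm (not_lt.mp hne) (not_lt.mp hne'))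
  constructor
  · rw [← Set.inter_union_diff (Eset S) A]
    exact h1.1.union h2.1
  · calc (Eset S).ncard = ((Eset S ∩ A) ∪ (Eset S \ A)).ncard := by
          rw [Set.inter_union_diff]
      _ ≤ (Eset S ∩ A).ncard + (Eset S \ A).ncard := Set.ncard_union_le _ _
      _ ≤ (Dset S).ncard + {W | RightMaximal S W}.ncard := add_le_add h1.2 h2.2
      _ ≤ S.length + S.length := add_le_add (Dset_ncard S) (RM_ncard S)
      _ = 2 * S.length := by ring

end Aux

/-- For a `#`-terminated string `T` of length `n`, the number of pairs
`(c, W)` with `W` right-maximal in `T` and `cW` occurring in `T` is at most `2n`;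
moreover the total number of triples `(c, W, a)` with `W` right-maximal, `Wa` occurring
in `T` and `cWa` occurring in `T` (implicit and explicit Weiner links) is `O(n)`,
concretely at most `4n`. -/
theorem weiner_links_linear {α : Type*} [LinearOrder α]
    (T : List α) (hash : α) (n : ℕ)
    (hn : T.length = n)
    (hne : T ≠ [])
    (hlast : T.getLast hne = hash)
    (honce : hash ∉ T.dropLast)
    (hmin : ∀ a : α, a ≠ hash → hash < a) :
    Set.ncard {p : α × List α | RightMaximal T p.2 ∧ (p.1 :: p.2) <:+: T} ≤ 2 * n ∧
    Set.ncard {q : α × List α × α | RightMaximal T q.2.1 ∧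
      (q.2.1 ++ [q.2.2]) <:+: T ∧ (q.1 :: (q.2.1 ++ [q.2.2])) <:+: T} ≤ 4 * n := by
  classical
  subst hn
  constructor
  · -- pairs
    set P : Set (α × List α) := {p | RightMaximal T p.2 ∧ (p.1 :: p.2) <:+: T} with hP
    set A : Set (α × List α) := {p | ∃ b, (b :: p.2) <:+: T ∧ b < p.1} with hA
    have h1 : (P ∩ A).Finite ∧ (P ∩ A).ncard ≤ (Dset T.reverse).ncard := by
      refine inj_bound (fun p => (p.1, p.2.reverse)) ?_ ?_ (Dset_finite T.reverse)
      · rintro p ⟨⟨hrm, hinf⟩, b, hbinf, hblt⟩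
        exact ⟨⟨b, p.1, hblt.ne, rev_infix_cons hbinf, rev_infix_cons hinf⟩,
          rev_infix_cons hinf, b, rev_infix_cons hbinf, hblt⟩
      · intro p hp q hq h
        simp only [Prod.mk.injEq] at h
        exact Prod.ext h.1 (by simpa using congrArg List.reverse h.2)
    have h2 : (P \ A).Finite ∧ (P \ A).ncard ≤ {W | RightMaximal T W}.ncard := by
      refine inj_bound (fun p => p.2) ?_ ?_ (RM_finite T)
      · rintro p ⟨⟨hrm, -⟩, -⟩; exact hrm
      · rintro p ⟨⟨-, hinf⟩, hnA⟩ q ⟨⟨-, hinf'⟩, hnA'⟩ h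
        simp only at h
        simp only [hA, Set.mem_setOf_eq, not_exists, not_and] at hnA hnA'
        have c1 : ¬ q.1 < p.1 := fun hlt => hnA q.1 (by rw [h]; exact hinf') hlt
        have c2 : ¬ p.1 < q.1 := fun hlt => hnA' p.1 (by rw [← h]; exact hinf) hlt
        exact Prod.ext (le_antisymm (not_lt.mp c1) (not_lt.mp c2)) h
    calc P.ncard = ((P ∩ A) ∪ (P \ A)).ncard := by rw [Set.inter_union_diff]
      _ ≤ (P ∩ A).ncard + (P \ A).ncard := Set.ncard_union_le _ _
      _ ≤ (Dset T.reverse).ncard + {W | RightMaximal T W}.ncard := add_le_add h1.2 h2.2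
      _ ≤ T.reverse.length + T.length := add_le_add (Dset_ncard _) (RM_ncard _)
      _ = 2 * T.length := by rw [List.length_reverse]; ring
  · -- triples
    set Q : Set (α × List α × α) := {q | RightMaximal T q.2.1 ∧
      (q.2.1 ++ [q.2.2]) <:+: T ∧ (q.1 :: (q.2.1 ++ [q.2.2])) <:+: T} with hQ
    set B : Set (α × List α × α) :=
      {q | ∃ b, (b :: (q.2.1 ++ [q.2.2])) <:+: T ∧ b < q.1} with hB
    have h1 : (Q ∩ B).Finite ∧ (Q ∩ B).ncard ≤ (Dset T.reverse).ncard := by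
      refine inj_bound (fun q => (q.1, (q.2.1 ++ [q.2.2]).reverse)) ?_ ?_
        (Dset_finite T.reverse)
      · rintro q ⟨⟨hrm, hainf, hcinf⟩, b, hbinf, hblt⟩
        exact ⟨⟨b, q.1, hblt.ne, rev_infix_cons hbinf, rev_infix_cons hcinf⟩,
          rev_infix_cons hcinf, b, rev_infix_cons hbinf, hblt⟩
      · intro q hq q' hq' h
        simp only [Prod.mk.injEq] at h
        have hr : q.2.1 ++ [q.2.2] = q'.2.1 ++ [q'.2.2] := by
          simpa using congrArg List.reverse h.2
        obtain ⟨hW, ha⟩ := List.append_inj' hr (by simp)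
        exact Prod.ext h.1 (Prod.ext hW (by simpa using ha))
    have h2 : (Q \ B).Finite ∧ (Q \ B).ncard ≤ (Eset T).ncard := by
      refine inj_bound (fun q => (q.2.1, q.2.2)) ?_ ?_ (Eset_bound T).1
      · rintro q ⟨⟨hrm, hainf, -⟩, -⟩
        exact ⟨hrm, hainf⟩
      · rintro q ⟨⟨-, -, hcinf⟩, hnB⟩ q' ⟨⟨-, -, hcinf'⟩, hnB'⟩ h
        simp only [Prod.mk.injEq] at h
        simp only [hB, Set.mem_setOf_eq, not_exists, not_and] at hnB hnB'
        have hr : q.2.1 ++ [q.2.2] = q'.2.1 ++ [q'.2.2] := by rw [h.1, h.2]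
        have c1 : ¬ q'.1 < q.1 := fun hlt => hnB q'.1 (by rw [hr]; exact hcinf') hlt
        have c2 : ¬ q.1 < q'.1 := fun hlt => hnB' q.1 (by rw [← hr]; exact hcinf) hlt
        exact Prod.ext (le_antisymm (not_lt.mp c1) (not_lt.mp c2)) (Prod.ext h.1 h.2)
    calc Q.ncard = ((Q ∩ B) ∪ (Q \ B)).ncard := by rw [Set.inter_union_diff]
      _ ≤ (Q ∩ B).ncard + (Q \ B).ncard := Set.ncard_union_le _ _
      _ ≤ (Dset T.reverse).ncard + (Eset T).ncard := add_le_add h1.2 h2.2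
      _ ≤ T.reverse.length + 2 * T.length := add_le_add (Dset_ncard _) (Eset_bound T).2
      _ ≤ 4 * T.length := by rw [List.length_reverse]; omega
end

section
/- Consider a process maintaining a stack of suffix-array intervals of a string of length n: initially the stack contains one interval of length n; at each step the top interval ⟨L,R⟩ is popped and replaced by at most σ pairwise disjoint subintervals each contained in [1,n], pushed in decreasing order of length (shortest pushed last, hence popped first). Then at every point in time the stack contains at most σ·(log₂ n + 1) intervals. -/
/-- Length of a (nonempty) interval `⟨L,R⟩` of natural numbers. -/
def ilen (p : ℕ × ℕ) : ℕ := p.2 + 1 - p.1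

/-- Two intervals are disjoint. -/
def IDisj (p q : ℕ × ℕ) : Prop := p.2 < q.1 ∨ q.2 < p.1

/-- Reachable stack states of the process: the stack (head = top) initially contains one
interval of length `n` contained in `[1,n]`; at each step the top interval `⟨L,R⟩` is
popped and replaced by at most `σ` pairwise disjoint nonempty subintervals of it, pushed
in decreasing order of length (shortest pushed last, hence at the head). -/
inductive StackReach (σ n : ℕ) : List (ℕ × ℕ) → Prop
  | init : StackReach σ n [(1, n)]
  | step (p : ℕ × ℕ) (rest new : List (ℕ × ℕ)) :
      StackReach σ n (p :: rest) →
      new.length ≤ σ →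
      (∀ q ∈ new, p.1 ≤ q.1 ∧ q.2 ≤ p.2 ∧ q.1 ≤ q.2) →
      List.Pairwise IDisj new →
      List.Pairwise (fun a b => ilen a ≤ ilen b) new →
      StackReach σ n (new ++ rest)

/-- The invariant. -/
def SInv (σ n : ℕ) (st : List (ℕ × ℕ)) : Prop :=
  (∀ q ∈ st, 1 ≤ q.1 ∧ q.2 ≤ n ∧ q.1 ≤ q.2) ∧
  st.Pairwise (fun a b => ilen a ≤ ilen b) ∧
  ∀ i : ℕ, (h : i + σ < st.length) →
    2 * ilen (st[i]'(by omega)) ≤ ilen (st[i+σ]'h)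

/-- Two disjoint nonempty subintervals: the shorter has at most half the length. -/
lemma half_lemma (p q q' : ℕ × ℕ)
    (hq : p.1 ≤ q.1 ∧ q.2 ≤ p.2 ∧ q.1 ≤ q.2)
    (hq' : p.1 ≤ q'.1 ∧ q'.2 ≤ p.2 ∧ q'.1 ≤ q'.2)
    (hd : IDisj q q') (hle : ilen q ≤ ilen q') :
    2 * ilen q ≤ ilen p := by
  unfold ilen IDisj at *
  omega

lemma inv_of_reach (σ n : ℕ) (hσ : 2 ≤ σ) (hn : 1 ≤ n)
    (st : List (ℕ × ℕ)) (h : StackReach σ n st) : SInv σ n st := by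
  induction h with
  | init =>
    refine ⟨?_, ?_, ?_⟩
    · intro q hq; simp at hq; subst hq; exact ⟨le_refl _, le_refl _, hn⟩
    · simp
    · intro i hi; simp at hi; omega
  | step p rest new hreach hlen hsub hdisj hsort ih =>
    obtain ⟨ihmem, ihsort, ihdbl⟩ := ih
    have hpmem := ihmem p (by simp)
    -- every new interval is inside [1,n] and nonempty
    have hnewmem : ∀ q ∈ new, 1 ≤ q.1 ∧ q.2 ≤ n ∧ q.1 ≤ q.2 := by
      intro q hq
      obtain ⟨h1, h2, h3⟩ := hsub q hq
      exact ⟨le_trans hpmem.1 h1, le_trans h2 hpmem.2.1, h3⟩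
    -- each new interval has length ≤ ilen p
    have hnewle : ∀ q ∈ new, ilen q ≤ ilen p := by
      intro q hq
      obtain ⟨h1, h2, h3⟩ := hsub q hq
      unfold ilen; omega
    have hrest_sorted : rest.Pairwise (fun a b => ilen a ≤ ilen b) :=
      (List.pairwise_cons.mp ihsort).2
    have hp_le_rest : ∀ r ∈ rest, ilen p ≤ ilen r :=
      (List.pairwise_cons.mp ihsort).1
    refine ⟨?_, ?_, ?_⟩
    · intro q hq
      rcases List.mem_append.mp hq with hq | hq
      · exact hnewmem q hq
      · exact ihmem q (by simp [hq])
    · exact List.pairwise_append.mpr ⟨hsort, hrest_sorted, fun a ha b hb =>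
        le_trans (hnewle a ha) (hp_le_rest b hb)⟩
    · intro i hi
      simp only [List.length_append] at hi
      have hik : i + σ ≥ new.length := by omega
      rw [List.getElem_append_right hik]
      by_cases hin : i < new.length
      · rw [List.getElem_append_left hin]
        by_cases hlast : i + 1 < new.length
        · -- not the longest child: use half_lemma with the next one
          have hd : IDisj (new[i]) (new[i+1]) := by
            have := List.pairwise_iff_getElem.mp hdisj i (i+1) hin hlast (by omega)
            exact this
          have hle : ilen (new[i]) ≤ ilen (new[i+1]) := by
            have := List.pairwise_iff_getElem.mp hsort i (i+1) hin hlast (by omega)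
            exact this
          have h2 : 2 * ilen (new[i]) ≤ ilen p :=
            half_lemma p _ _ (hsub _ (List.getElem_mem hin))
              (hsub _ (List.getElem_mem hlast)) hd hle
          have hple : ilen p ≤ ilen (rest[i + σ - new.length]'(by omega)) :=
            hp_le_rest _ (List.getElem_mem (by omega))
          omega
        · -- the longest child: use old doubling from p to rest[σ-1]
          obtain ⟨m, rfl⟩ : ∃ m, σ = m + 1 := ⟨σ - 1, by omega⟩
          have hi' : 0 + (m+1) < (p :: rest).length := by simp; omega
          have hdbl := ihdbl 0 hi'
          simp only [List.getElem_cons_zero, Nat.zero_add,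
            List.getElem_cons_succ] at hdbl
          have hq : ilen (new[i]) ≤ ilen p := hnewle _ (List.getElem_mem hin)
          have hmono : ilen (rest[m]'(by simp only [List.length_cons] at hi'; omega)) ≤
              ilen (rest[i + (m+1) - new.length]'(by omega)) := by
            rcases lt_or_eq_of_le (show m ≤ i + (m+1) - new.length by omega) with hlt | heq
            · exact List.pairwise_iff_getElem.mp hrest_sorted _ _ _ _ hlt
            · simp_rw [← heq]; exact le_rfl
          omega
      · -- both indices in rest: old invariant shifted
        push_neg at hin
        rw [List.getElem_append_right hin]
        have hi2 : (i - new.length + 1) + σ < (p :: rest).length := by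
          simp only [List.length_cons]; omega
        have hdbl := ihdbl (i - new.length + 1) hi2
        have e1 : (p :: rest)[i - new.length + 1]'(by omega) =
            rest[i - new.length]'(by omega) := List.getElem_cons_succ ..
        have e2 : (p :: rest)[(i - new.length + 1) + σ]'hi2 =
            rest[i + σ - new.length]'(by omega) := by
          have : (i - new.length + 1) + σ = (i + σ - new.length) + 1 := by omega
          simp_rw [this]; exact List.getElem_cons_succ ..
        rw [e1, e2] at hdbl
        exact hdbl

/-- In the above process on suffix-array intervals of `[1,n]` with branching
at most `σ ≥ 2`, at every point in time the stack contains at most `σ·(log₂ n + 1)`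
intervals. -/
theorem stack_size_bound (σ n : ℕ) (hσ : 2 ≤ σ) (hn : 1 ≤ n)
    (st : List (ℕ × ℕ)) (h : StackReach σ n st) :
    st.length ≤ σ * (Nat.log 2 n + 1) := by
  obtain ⟨hmem, hsort, hdbl⟩ := inv_of_reach σ n hσ hn st h
  by_contra hc
  push_neg at hc
  set L := Nat.log 2 n with hL
  -- growth: ilen st[σ*j] ≥ 2^j
  have grow : ∀ j : ℕ, (hj : σ * j < st.length) → 2 ^ j ≤ ilen (st[σ*j]'hj) := by
    intro j
    induction j with
    | zero =>
      intro hj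
      have := hmem _ (List.getElem_mem hj)
      unfold ilen; omega
    | succ k ihk =>
      intro hj
      have hjk : σ * k < st.length := by nlinarith [hσ]
      have h1 := ihk hjk
      have hstep : σ * k + σ < st.length := by
        have : σ * (k+1) = σ * k + σ := by ring
        omega
      have h2 := hdbl (σ * k) hstep
      have e : σ * (k+1) = σ * k + σ := by ring
      calc 2 ^ (k+1) = 2 * 2 ^ k := by ring
        _ ≤ 2 * ilen (st[σ*k]'(by omega)) := by omega
        _ ≤ ilen (st[σ*k+σ]'hstep) := h2
        _ = ilen (st[σ*(k+1)]'hj) := by congr 1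
  have hidx : σ * (L + 1) < st.length := hc
  have hbig := grow (L + 1) hidx
  have hsmall : ilen (st[σ*(L+1)]'hidx) ≤ n := by
    have := hmem _ (List.getElem_mem hidx)
    unfold ilen; omega
  have hpow := Nat.lt_pow_succ_log_self (by norm_num : 1 < 2) n
  rw [← hL] at hpow
  have : (2:ℕ) ^ (L + 1) = 2 * 2 ^ L := by ring
  omega
end

section
/- Backward search correctness: let T be a #-terminated string of length n with suffix array SA and Burrows–Wheeler transform BWT (BWT[i] = T[SA[i] − 1 mod n]). For any string W occurring in T with range(W) = ⟨L, R⟩ and any character c ≠ #, range(cW) = ⟨C[c] + rank_c(BWT, L), C[c] + rank_c(BWT, R + 1) − 1⟩, where C[c] is one plus the number of characters of T smaller than c and rank_c(BWT, i) is the number of occurrences of c in BWT[1..i−1]. -/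
/-- `C[c]`: one plus the number of characters of `T` strictly smaller than `c`. -/
noncomputable def Cval {α : Type*} [LinearOrder α] (T : List α) (c : α) : ℕ :=
  1 + Set.ncard {j : ℕ | 1 ≤ j ∧ j ≤ T.length ∧ ∃ x, T[j-1]? = some x ∧ x < c}

/-- `rank_c(BWT, i)`: number of occurrences of `c` in `BWT[1..i-1]`. -/
noncomputable def rankC {α : Type*} (BWT : ℕ → α) (c : α) (i : ℕ) : ℕ :=
  Set.ncard {j : ℕ | 1 ≤ j ∧ j < i ∧ BWT j = c}

private lemma list_cons_lt_cons_iff {α : Type*} [LinearOrder α] {a b : α} {s t : List α} :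
    (a :: s : List α) < b :: t ↔ a < b ∨ (a = b ∧ s < t) := by
  constructor
  · intro h
    have h' : List.Lex (· < ·) (a :: s) (b :: t) := h
    cases h' with
    | cons h => exact Or.inr ⟨rfl, h⟩
    | rel h => exact Or.inl h
  · rintro (h | ⟨rfl, h⟩)
    · exact (List.Lex.rel h : List.Lex (· < ·) _ _)
    · exact (List.Lex.cons h : List.Lex (· < ·) _ _)

/-- backward search correctness: Let `T` be a `#`-terminated string of
length `n` with suffix array `SA` and Burrows–Wheeler transform `BWT`. For any string `W`
occurring in `T` with `range(W) = ⟨L,R⟩` and any character `c ≠ #`,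
`range(cW) = ⟨C[c] + rank_c(BWT,L), C[c] + rank_c(BWT,R+1) - 1⟩`. -/
theorem backward_search_correct {α : Type*} [LinearOrder α]
    (T : List α) (hash : α) (n : ℕ)
    (hn : T.length = n) (hn0 : 1 ≤ n)
    (hne : T ≠ [])
    (hlast : T.getLast hne = hash)
    (honce : hash ∉ T.dropLast)
    (hmin : ∀ a : α, a ≠ hash → hash < a)
    (SA : ℕ → ℕ)
    (hSAin : ∀ i, 1 ≤ i → i ≤ n → 1 ≤ SA i ∧ SA i ≤ n)
    (hSAbij : ∀ p, 1 ≤ p → p ≤ n → ∃! i, 1 ≤ i ∧ i ≤ n ∧ SA i = p)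
    (hsorted : ∀ i j, 1 ≤ i → i < j → j ≤ n → T.drop (SA i - 1) < T.drop (SA j - 1))
    (BWT : ℕ → α)
    (hBWT1 : ∀ i, 1 ≤ i → i ≤ n → SA i = 1 → BWT i = hash)
    (hBWT2 : ∀ i, 1 ≤ i → i ≤ n → 1 < SA i → T[SA i - 2]? = some (BWT i))
    (W : List α) (hWocc : W <:+: T)
    (c : α) (hc : c ≠ hash)
    (L R : ℕ) (hL : 1 ≤ L) (hR : R ≤ n) (hLR : L ≤ R)
    (hrange : ∀ i, 1 ≤ i → i ≤ n → (W <+: T.drop (SA i - 1) ↔ (L ≤ i ∧ i ≤ R))) :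
    ∀ i, 1 ≤ i → i ≤ n →
      ((c :: W) <+: T.drop (SA i - 1) ↔
        (Cval T c + rankC BWT c L ≤ i ∧ i ≤ Cval T c + rankC BWT c (R + 1) - 1)) := by
  classical
  subst hn
  -- Finset versions of rank and Cval
  have hrank : ∀ k, rankC BWT c k
      = ((Finset.Ico 1 k).filter (fun j => BWT j = c)).card := by
    intro k
    have hset : {j : ℕ | 1 ≤ j ∧ j < k ∧ BWT j = c}
        = ↑((Finset.Ico 1 k).filter (fun j => BWT j = c)) := by
      ext q; simp [and_assoc]
    rw [rankC, hset, Set.ncard_coe_finset]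
  have hCval : Cval T c
      = 1 + ((Finset.Icc 1 T.length).filter (fun q => ∃ x, T[q-1]? = some x ∧ x < c)).card := by
    have hset : {j : ℕ | 1 ≤ j ∧ j ≤ T.length ∧ ∃ x, T[j-1]? = some x ∧ x < c}
        = ↑((Finset.Icc 1 T.length).filter (fun q => ∃ x, T[q-1]? = some x ∧ x < c)) := by
      ext q; simp [and_assoc]
    rw [Cval, hset, Set.ncard_coe_finset]
  have hC1 : 1 ≤ Cval T c := by rw [hCval]; omega
  -- rank monotone and step
  have hrmono : ∀ a b, a ≤ b → rankC BWT c a ≤ rankC BWT c b := by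
    intro a b hab
    rw [hrank, hrank]
    exact Finset.card_le_card (Finset.filter_subset_filter _ (Finset.Ico_subset_Ico le_rfl hab))
  have hrstep : ∀ k, 1 ≤ k →
      rankC BWT c (k+1) = rankC BWT c k + (if BWT k = c then 1 else 0) := by
    intro k hk
    rw [hrank, hrank, Finset.Ico_add_one_right_eq_Icc, ← Finset.Ico_insert_right hk, Finset.filter_insert]
    by_cases hBk : BWT k = c
    · rw [if_pos hBk, if_pos hBk]
      exact Finset.card_insert_of_notMem (by simp)
    · rw [if_neg hBk, if_neg hBk]
      simp
  -- suffix decomposition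
  have hget : ∀ p, 1 ≤ p → p ≤ T.length →
      ∃ a, T[p-1]? = some a ∧ T.drop (p-1) = a :: T.drop p := by
    intro p h1 h2
    have hp : p - 1 < T.length := by omega
    refine ⟨T[p-1], List.getElem?_eq_getElem hp, ?_⟩
    rw [List.drop_eq_getElem_cons hp, show p - 1 + 1 = p by omega]
  -- last character is hash
  have hlastq : T[T.length - 1]? = some hash := by
    have h1 : T.length - 1 < T.length := by omega
    rw [List.getElem?_eq_getElem h1]
    rw [List.getLast_eq_getElem] at hlast
    rw [hlast]
  -- inner characters are not hash
  have hinner : ∀ p, 1 ≤ p → p < T.length → T[p-1]? ≠ some hash := by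
    intro p h1 h2 hcontra
    have hp : p - 1 < T.length := by omega
    rw [List.getElem?_eq_getElem hp] at hcontra
    have hph : T[p-1] = hash := by
      injection hcontra
    apply honce
    rw [← hph]
    have hp' : p - 1 < T.dropLast.length := by
      rw [List.length_dropLast]; omega
    have hdl : T.dropLast[p-1] = T[p-1] := List.getElem_dropLast hp'
    rw [← hdl]
    exact List.getElem_mem _
  -- SA injectivity
  have hSAinj : ∀ i j, 1 ≤ i → i ≤ T.length → 1 ≤ j → j ≤ T.length → SA i = SA j → i = j := by
    intro i j hi1 hi2 hj1 hj2 hij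
    obtain ⟨k, -, huniq⟩ := hSAbij (SA i) (hSAin i hi1 hi2).1 (hSAin i hi1 hi2).2
    exact (huniq i ⟨hi1, hi2, rfl⟩).trans (huniq j ⟨hj1, hj2, hij.symm⟩).symm
  -- sortedness iff
  have hmono : ∀ i j, 1 ≤ i → i ≤ T.length → 1 ≤ j → j ≤ T.length →
      (T.drop (SA i - 1) < T.drop (SA j - 1) ↔ i < j) := by
    intro i j hi1 hi2 hj1 hj2
    constructor
    · intro h
      by_contra hle
      push_neg at hle
      rcases eq_or_lt_of_le hle with heq | hlt
      · subst heq
        exact absurd h (lt_irrefl _)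
      · exact absurd h (lt_asymm (hsorted j i hj1 hlt hi2))
    · intro h
      exact hsorted i j hi1 h hj2
  -- position count
  have hposcount : ∀ j, 1 ≤ j → j ≤ T.length →
      ((Finset.Icc 1 T.length).filter (fun q => T.drop (q - 1) < T.drop (SA j - 1))).card
        = j - 1 := by
    intro j hj1 hj2
    have e1 : ((Finset.Icc 1 T.length).filter
        (fun k => T.drop (SA k - 1) < T.drop (SA j - 1))) = Finset.Icc 1 (j-1) := by
      ext k
      simp only [Finset.mem_filter, Finset.mem_Icc]
      constructor
      · rintro ⟨⟨m1, m2⟩, m3⟩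
        have := (hmono k j m1 m2 hj1 hj2).1 m3
        exact ⟨m1, by omega⟩
      · rintro ⟨m1, m2⟩
        have hk2 : k ≤ T.length := by omega
        exact ⟨⟨m1, hk2⟩, (hmono k j m1 hk2 hj1 hj2).2 (by omega)⟩
    have e2 : ((Finset.Icc 1 T.length).filter
          (fun k => T.drop (SA k - 1) < T.drop (SA j - 1))).card
        = ((Finset.Icc 1 T.length).filter
          (fun q => T.drop (q - 1) < T.drop (SA j - 1))).card := by
      apply Finset.card_bij (fun k _ => SA k)
      · intro k hk
        simp only [Finset.mem_filter, Finset.mem_Icc] at hk ⊢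
        exact ⟨⟨(hSAin k hk.1.1 hk.1.2).1, (hSAin k hk.1.1 hk.1.2).2⟩, hk.2⟩
      · intro k1 hk1 k2 hk2
        simp only [Finset.mem_filter, Finset.mem_Icc] at hk1 hk2
        exact hSAinj k1 k2 hk1.1.1 hk1.1.2 hk2.1.1 hk2.1.2
      · intro q hq
        simp only [Finset.mem_filter, Finset.mem_Icc] at hq
        obtain ⟨k, ⟨hk1, hk2, hk3⟩, -⟩ := hSAbij q hq.1.1 hq.1.2
        refine ⟨k, ?_, hk3⟩
        simp only [Finset.mem_filter, Finset.mem_Icc]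
        rw [hk3]
        exact ⟨⟨hk1, hk2⟩, hq.2⟩
    rw [← e2, e1, Nat.card_Icc]
    omega
  -- BWT j = c implies SA j ≥ 2
  have hSA2 : ∀ j, 1 ≤ j → j ≤ T.length → BWT j = c → 2 ≤ SA j := by
    intro j h1 h2 hB
    have := (hSAin j h1 h2).1
    by_contra h
    have hS1 : SA j = 1 := by omega
    have := hBWT1 j h1 h2 hS1
    rw [hB] at this
    exact hc this
  -- LF mapping lemma (core counting argument)
  have hLF : ∀ j, 1 ≤ j → j ≤ T.length → BWT j = c → ∀ i0, 1 ≤ i0 → i0 ≤ T.length →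
      SA i0 = SA j - 1 → i0 = Cval T c + rankC BWT c j := by
    intro j hj1 hj2 hBj i0 hi01 hi02 hSAi0
    have hSAj2 : 2 ≤ SA j := hSA2 j hj1 hj2 hBj
    have hSAjn : SA j ≤ T.length := (hSAin j hj1 hj2).2
    set p := SA j - 1 with hpdef
    have hp1 : 1 ≤ p := by omega
    have hpn : p ≤ T.length := by omega
    have hTp : T[p-1]? = some c := by
      have h2 := hBWT2 j hj1 hj2 (by omega)
      rw [hBj] at h2
      have he : SA j - 2 = p - 1 := by omega
      rw [he] at h2
      exact h2
    have hcard : ((Finset.Icc 1 T.length).filter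
        (fun q => T.drop (q - 1) < T.drop (p - 1))).card = i0 - 1 := by
      have h := hposcount i0 hi01 hi02
      rw [hSAi0] at h
      exact h
    obtain ⟨ap, hapq, hsp⟩ := hget p hp1 hpn
    have hapc : ap = c := by
      rw [hTp] at hapq
      exact (Option.some.inj hapq).symm
    rw [hapc] at hsp
    -- T.drop p is the suffix at index j
    have hdp : T.drop p = T.drop (SA j - 1) := by rw [← hpdef]
    have hsplit : ∀ q, 1 ≤ q → q ≤ T.length →
        (T.drop (q-1) < T.drop (p-1) ↔
          ((∃ x, T[q-1]? = some x ∧ x < c) ∨ (T[q-1]? = some c ∧ T.drop q < T.drop p))) := by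
      intro q h1 h2
      obtain ⟨aq, haq, hsq⟩ := hget q h1 h2
      rw [hsq, hsp, list_cons_lt_cons_iff]
      constructor
      · rintro (h | ⟨rfl, h⟩)
        · exact Or.inl ⟨aq, haq, h⟩
        · exact Or.inr ⟨haq, h⟩
      · rintro (⟨x, hx, hxc⟩ | ⟨hqc, h⟩)
        · left
          rw [haq] at hx
          rwa [Option.some.inj hx]
        · right
          rw [haq] at hqc
          exact ⟨Option.some.inj hqc, h⟩
    have hfe : (Finset.Icc 1 T.length).filter (fun q => T.drop (q-1) < T.drop (p-1))
        = ((Finset.Icc 1 T.length).filter (fun q => ∃ x, T[q-1]? = some x ∧ x < c)) ∪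
          ((Finset.Icc 1 T.length).filter (fun q => T[q-1]? = some c ∧ T.drop q < T.drop p)) := by
      ext q
      simp only [Finset.mem_filter, Finset.mem_Icc, Finset.mem_union]
      constructor
      · rintro ⟨hq, h⟩
        rcases (hsplit q hq.1 hq.2).1 h with h' | h'
        · exact Or.inl ⟨hq, h'⟩
        · exact Or.inr ⟨hq, h'⟩
      · rintro (⟨hq, h'⟩ | ⟨hq, h'⟩)
        · exact ⟨hq, (hsplit q hq.1 hq.2).2 (Or.inl h')⟩
        · exact ⟨hq, (hsplit q hq.1 hq.2).2 (Or.inr h')⟩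
    have hdisj : Disjoint
        ((Finset.Icc 1 T.length).filter (fun q => ∃ x, T[q-1]? = some x ∧ x < c))
        ((Finset.Icc 1 T.length).filter (fun q => T[q-1]? = some c ∧ T.drop q < T.drop p)) := by
      rw [Finset.disjoint_left]
      intro q hq1 hq2
      simp only [Finset.mem_filter] at hq1 hq2
      obtain ⟨-, x, hx, hxc⟩ := hq1
      obtain ⟨-, hqc, -⟩ := hq2
      rw [hqc] at hx
      rw [Option.some.inj hx] at hxc
      exact absurd hxc (lt_irrefl x)
    have hcardB : ((Finset.Icc 1 T.length).filter
        (fun q => T[q-1]? = some c ∧ T.drop q < T.drop p)).card = rankC BWT c j := by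
      rw [hrank]
      refine (Finset.card_bij (fun j' _ => SA j' - 1) ?_ ?_ ?_).symm
      · intro j' hj'
        simp only [Finset.mem_filter, Finset.mem_Ico] at hj'
        obtain ⟨⟨hj'1, hj'j⟩, hBj'⟩ := hj'
        have hj'n : j' ≤ T.length := by omega
        have h2 : 2 ≤ SA j' := hSA2 j' hj'1 hj'n hBj'
        have hn' : SA j' ≤ T.length := (hSAin j' hj'1 hj'n).2
        simp only [Finset.mem_filter, Finset.mem_Icc]
        refine ⟨⟨by omega, by omega⟩, ?_, ?_⟩
        · have hb := hBWT2 j' hj'1 hj'n (by omega)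
          rw [hBj'] at hb
          rw [show SA j' - 1 - 1 = SA j' - 2 by omega]
          exact hb
        · rw [hdp]
          exact (hmono j' j hj'1 hj'n hj1 hj2).2 hj'j
      · intro j1 hj1' j2 hj2' heq
        simp only [Finset.mem_filter, Finset.mem_Ico] at hj1' hj2'
        obtain ⟨⟨a1, b1⟩, c1⟩ := hj1'
        obtain ⟨⟨a2, b2⟩, c2⟩ := hj2'
        have ha1 : 2 ≤ SA j1 := hSA2 j1 a1 (by omega) c1
        have ha2 : 2 ≤ SA j2 := hSA2 j2 a2 (by omega) c2
        have heq' : SA j1 - 1 = SA j2 - 1 := heq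
        exact hSAinj j1 j2 a1 (by omega) a2 (by omega) (by omega)
      · intro q hq
        simp only [Finset.mem_filter, Finset.mem_Icc] at hq
        obtain ⟨⟨hq1, hq2⟩, hqc, hqlt⟩ := hq
        have hqn : q ≠ T.length := by
          intro h
          rw [h] at hqc
          rw [hlastq] at hqc
          exact hc (Option.some.inj hqc).symm
        obtain ⟨j', ⟨hj'1, hj'2, hSAj'⟩, -⟩ := hSAbij (q+1) (by omega) (by omega)
        have hBj' : BWT j' = c := by
          have hb := hBWT2 j' hj'1 hj'2 (by omega)
          rw [hSAj'] at hb
          rw [show q + 1 - 2 = q - 1 by omega] at hb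
          rw [hqc] at hb
          exact (Option.some.inj hb).symm
        have hj'j : j' < j := by
          apply (hmono j' j hj'1 hj'2 hj1 hj2).1
          rw [hSAj']
          rw [show q + 1 - 1 = q by omega]
          rw [← hdp]
          exact hqlt
        refine ⟨j', ?_, ?_⟩
        · simp only [Finset.mem_filter, Finset.mem_Ico]
          exact ⟨⟨hj'1, hj'j⟩, hBj'⟩
        · show SA j' - 1 = q
          omega
    have hcardA : ((Finset.Icc 1 T.length).filter
        (fun q => ∃ x, T[q-1]? = some x ∧ x < c)).card = Cval T c - 1 := by
      rw [hCval]
      omega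
    rw [hfe, Finset.card_union_of_disjoint hdisj, hcardA, hcardB] at hcard
    omega
  -- main proof
  intro i hi1 hi2
  constructor
  · -- forward direction
    intro hpre
    obtain ⟨a, ha, hs⟩ := hget (SA i) (hSAin i hi1 hi2).1 (hSAin i hi1 hi2).2
    rw [hs, List.cons_prefix_cons] at hpre
    obtain ⟨hca, hWpre⟩ := hpre
    rw [← hca] at ha
    have hSAlt : SA i < T.length := by
      rcases eq_or_lt_of_le (hSAin i hi1 hi2).2 with heq | hlt
      · exfalso
        rw [heq, hlastq] at ha
        exact hc (Option.some.inj ha).symm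
      · exact hlt
    have hSAi1 : 1 ≤ SA i := (hSAin i hi1 hi2).1
    obtain ⟨j, ⟨hj1, hj2, hSAj⟩, -⟩ := hSAbij (SA i + 1) (by omega) (by omega)
    have hBj : BWT j = c := by
      have h2 := hBWT2 j hj1 hj2 (by omega)
      rw [hSAj] at h2
      rw [show SA i + 1 - 2 = SA i - 1 by omega] at h2
      rw [ha] at h2
      exact (Option.some.inj h2).symm
    have hjLR : L ≤ j ∧ j ≤ R := by
      rw [← hrange j hj1 hj2]
      have hd : T.drop (SA j - 1) = T.drop (SA i) := by
        rw [hSAj, show SA i + 1 - 1 = SA i by omega]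
      rw [hd]
      exact hWpre
    have hij : i = Cval T c + rankC BWT c j :=
      hLF j hj1 hj2 hBj i hi1 hi2 (by omega)
    have hb1 : rankC BWT c L ≤ rankC BWT c j := hrmono L j hjLR.1
    have hb2 : rankC BWT c j + 1 ≤ rankC BWT c (R+1) := by
      have hst := hrstep j hj1
      rw [if_pos hBj] at hst
      have := hrmono (j+1) (R+1) (by omega)
      omega
    omega
  · -- reverse direction
    rintro ⟨h1, h2⟩
    have hm2 : i - Cval T c < rankC BWT c (R+1) := by omega
    have hex : ∃ k, i - Cval T c + 1 ≤ rankC BWT c k := ⟨R+1, by omega⟩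
    have hj0 := Nat.find_spec hex
    set j0 := Nat.find hex with hj0def
    have hj0min : ∀ k, k < j0 → rankC BWT c k < i - Cval T c + 1 := by
      intro k hk
      have := Nat.find_min hex hk
      omega
    have hj02 : 2 ≤ j0 := by
      by_contra h
      have hle : j0 ≤ 1 := by omega
      have h0 : rankC BWT c j0 = 0 := by
        rw [hrank]
        have : Finset.Ico 1 j0 = ∅ := Finset.Ico_eq_empty (by omega)
        rw [this]
        simp
      omega
    have hstep0 := hrstep (j0 - 1) (by omega)
    rw [show j0 - 1 + 1 = j0 by omega] at hstep0
    have hlt := hj0min (j0 - 1) (by omega)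
    have hBj : BWT (j0 - 1) = c := by
      by_contra hB
      rw [if_neg hB] at hstep0
      omega
    rw [if_pos hBj] at hstep0
    have hrj : rankC BWT c (j0 - 1) = i - Cval T c := by omega
    have hjL : L ≤ j0 - 1 := by
      by_contra h
      push_neg at h
      have hmm := hrmono j0 L (by omega)
      omega
    have hjR : j0 - 1 ≤ R := by
      by_contra h
      push_neg at h
      have hmm := hrmono (R+1) (j0-1) (by omega)
      omega
    have hj1' : 1 ≤ j0 - 1 := by omega
    have hjn : j0 - 1 ≤ T.length := by omega
    have hSAj2 : 2 ≤ SA (j0-1) := hSA2 (j0-1) hj1' hjn hBj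
    have hSAjn : SA (j0-1) ≤ T.length := (hSAin (j0-1) hj1' hjn).2
    obtain ⟨i0, ⟨hi01, hi02, hSAi0⟩, -⟩ := hSAbij (SA (j0-1) - 1) (by omega) (by omega)
    have hieq : i0 = Cval T c + rankC BWT c (j0-1) :=
      hLF (j0-1) hj1' hjn hBj i0 hi01 hi02 hSAi0
    have hii0 : i0 = i := by
      rw [hieq, hrj]
      omega
    have hSAi : SA i = SA (j0-1) - 1 := by
      rw [← hii0]
      exact hSAi0
    obtain ⟨a, ha, hs⟩ := hget (SA i) (hSAin i hi1 hi2).1 (hSAin i hi1 hi2).2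
    have hac : a = c := by
      have h2 := hBWT2 (j0-1) hj1' hjn (by omega)
      rw [hBj] at h2
      rw [hSAi, show SA (j0-1) - 1 - 1 = SA (j0-1) - 2 by omega, h2] at ha
      exact (Option.some.inj ha).symm
    rw [hs, hac, List.cons_prefix_cons]
    refine ⟨rfl, ?_⟩
    have hd : T.drop (SA i) = T.drop (SA (j0-1) - 1) := by rw [hSAi]
    rw [hd]
    exact (hrange (j0-1) hj1' hjn).2 ⟨hjL, hjR⟩
end

section
/- Extended backward search on an empty interval: let T be a #-terminated string, c ≠ # a character, and W any string (possibly not occurring in T). If L − 1 is the number of suffixes of T lexicographically smaller than W, then C[c] + rank_c(BWT, L) − 1 is the number of suffixes of T lexicographically smaller than cW. -/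
theorem cons_lt_iff' {α : Type*} [LinearOrder α] (a b : α) (l m : List α) :
    (a :: l) < (b :: m) ↔ a < b ∨ (a = b ∧ l < m) := by
  constructor
  · intro h
    cases (show List.Lex (· < ·) (a :: l) (b :: m) from h) with
    | cons h => exact Or.inr ⟨rfl, h⟩
    | rel h => exact Or.inl h
  · rintro (h | ⟨rfl, h⟩)
    · exact List.Lex.rel h
    · exact List.Lex.cons h

theorem ncard_Icc_one (n : ℕ) : (Set.Icc 1 n).ncard = n := by
  rw [Set.ncard_eq_toFinset_card', Set.toFinset_Icc, Nat.card_Icc]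
  omega

/-- extended backward search on a possibly empty interval: Let `T` be a
`#`-terminated string with suffix array `SA` and BWT, `c ≠ #` a character and `W` any
string (possibly not occurring in `T`). If `L - 1` is the number of suffixes of `T`
lexicographically smaller than `W`, then `C[c] + rank_c(BWT, L) - 1` is the number of
suffixes of `T` lexicographically smaller than `cW`. -/
theorem backward_search_empty_interval {α : Type*} [LinearOrder α]
    (T : List α) (hash : α) (n : ℕ)
    (hn : T.length = n) (hn0 : 1 ≤ n)
    (hne : T ≠ [])
    (hlast : T.getLast hne = hash)
    (honce : hash ∉ T.dropLast)
    (hmin : ∀ a : α, a ≠ hash → hash < a)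
    (SA : ℕ → ℕ)
    (hSAin : ∀ i, 1 ≤ i → i ≤ n → 1 ≤ SA i ∧ SA i ≤ n)
    (hSAbij : ∀ p, 1 ≤ p → p ≤ n → ∃! i, 1 ≤ i ∧ i ≤ n ∧ SA i = p)
    (hsorted : ∀ i j, 1 ≤ i → i < j → j ≤ n → T.drop (SA i - 1) < T.drop (SA j - 1))
    (BWT : ℕ → α)
    (hBWT1 : ∀ i, 1 ≤ i → i ≤ n → SA i = 1 → BWT i = hash)
    (hBWT2 : ∀ i, 1 ≤ i → i ≤ n → 1 < SA i → T[SA i - 2]? = some (BWT i))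
    (c : α) (hc : c ≠ hash)
    (W : List α) (L : ℕ) (hL : 1 ≤ L)
    (hsmaller : L - 1 = Set.ncard {i : ℕ | 1 ≤ i ∧ i ≤ n ∧ T.drop (SA i - 1) < W}) :
    Cval T c + rankC BWT c L - 1 =
      Set.ncard {i : ℕ | 1 ≤ i ∧ i ≤ n ∧ T.drop (SA i - 1) < c :: W} := by
  classical
  have hfin : ∀ (s : Set ℕ), s ⊆ Set.Icc 1 n → s.Finite := by
    intro s hs
    exact (Set.finite_Icc 1 n).subset hs
  set M : Set ℕ := {i : ℕ | 1 ≤ i ∧ i ≤ n ∧ T.drop (SA i - 1) < W} with hM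
  have hMsub : M ⊆ Set.Icc 1 n := by
    intro i hi
    exact Set.mem_Icc.2 ⟨hi.1, hi.2.1⟩
  have hMfin : M.Finite := hfin M hMsub
  have hLn : L - 1 ≤ n := by
    rw [hsmaller, ← ncard_Icc_one n]
    exact Set.ncard_le_ncard hMsub (Set.finite_Icc 1 n)
  -- SA is injective on [1, n]
  have hSAinj : ∀ i j, 1 ≤ i → i ≤ n → 1 ≤ j → j ≤ n → SA i = SA j → i = j := by
    intro i j hi1 hin hj1 hjn hij
    by_contra hne'
    rcases lt_or_gt_of_ne hne' with h | h
    · have := hsorted i j hi1 h hjn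
      rw [hij] at this
      exact lt_irrefl _ this
    · have := hsorted j i hj1 h hin
      rw [hij] at this
      exact lt_irrefl _ this
  -- index bound
  have hidx : ∀ p, 1 ≤ p → p ≤ n → p - 1 < T.length := by
    intro p h1 h2; omega
  -- decomposition of suffixes
  have hdropcons : ∀ (p : ℕ) (h1 : 1 ≤ p) (h2 : p ≤ n),
      T.drop (p - 1) = T[p-1]'(hidx p h1 h2) :: T.drop p := by
    intro p h1 h2
    have := List.drop_eq_getElem_cons (hidx p h1 h2)
    rwa [show p - 1 + 1 = p by omega] at this
  -- last element of T is hash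
  have hendsome : T[n-1]? = some hash := by
    subst hn
    have hl := List.getLast_eq_getElem hne
    rw [hlast] at hl
    rw [List.getElem?_eq_getElem (by omega : T.length - 1 < T.length), ← hl]
  -- a position holding c is < n
  have hclt : ∀ p, 1 ≤ p → p ≤ n → T[p-1]? = some c → p < n := by
    intro p h1 h2 hp
    rcases lt_or_eq_of_le h2 with h | h
    · exact h
    · subst h
      rw [hendsome] at hp
      exact absurd (Option.some_injective _ hp).symm hc
  -- key lemma: for i in range, suffix at rank i is < W iff i < L
  have hdown : ∀ i j, i ∈ M → 1 ≤ j → j ≤ i → j ∈ M := by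
    intro i j hi hj1 hji
    obtain ⟨hi1, hin, hiw⟩ := hi
    rcases lt_or_eq_of_le hji with h | h
    · exact ⟨hj1, by omega, lt_trans (hsorted j i hj1 h hin) hiw⟩
    · subst h; exact ⟨hi1, hin, hiw⟩
  have hkey : ∀ i, 1 ≤ i → i ≤ n → (T.drop (SA i - 1) < W ↔ i < L) := by
    intro i hi1 hin
    constructor
    · intro h
      have hiM : i ∈ M := ⟨hi1, hin, h⟩
      have hsub : Set.Icc 1 i ⊆ M := fun j hj =>
        hdown i j hiM (Set.mem_Icc.1 hj).1 (Set.mem_Icc.1 hj).2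
      have := Set.ncard_le_ncard hsub hMfin
      rw [ncard_Icc_one, ← hsmaller] at this
      omega
    · intro h
      by_contra hne'
      have hsub : M ⊆ Set.Icc 1 (i - 1) := by
        intro j hj
        refine Set.mem_Icc.2 ⟨hj.1, ?_⟩
        by_contra hji
        exact hne' (hdown j i hj hi1 (by omega)).2.2
      have := Set.ncard_le_ncard hsub (Set.finite_Icc 1 (i-1))
      rw [ncard_Icc_one, ← hsmaller] at this
      omega
  -- the sets
  set A : Set ℕ := {p : ℕ | 1 ≤ p ∧ p ≤ T.length ∧ ∃ x, T[p-1]? = some x ∧ x < c} with hA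
  set Q : Set ℕ := {p : ℕ | 1 ≤ p ∧ p ≤ n ∧ T[p-1]? = some c ∧ T.drop p < W} with hQ
  set B : Set ℕ := {j : ℕ | 1 ≤ j ∧ j < L ∧ BWT j = c} with hB
  set F : Set ℕ := {i : ℕ | 1 ≤ i ∧ i ≤ n ∧ T.drop (SA i - 1) < c :: W} with hF
  set P : Set ℕ := {p : ℕ | 1 ≤ p ∧ p ≤ n ∧ T.drop (p - 1) < c :: W} with hP
  -- B facts
  have hBfacts : ∀ j, j ∈ B → j ≤ n ∧ 2 ≤ SA j ∧ SA j ≤ n := by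
    intro j hj
    obtain ⟨hj1, hjL, hjc⟩ := hj
    have hjn : j ≤ n := by omega
    obtain ⟨hS1, hSn⟩ := hSAin j hj1 hjn
    have h2 : 2 ≤ SA j := by
      rcases lt_or_eq_of_le hS1 with h | h
      · omega
      · exact absurd (hjc.symm.trans (hBWT1 j hj1 hjn h.symm)) hc
    exact ⟨hjn, h2, hSn⟩
  -- Q = (SA · - 1) '' B
  have hQB : Q = (fun j => SA j - 1) '' B := by
    ext p
    simp only [Set.mem_image, hQ, hB, Set.mem_setOf_eq]
    constructor
    · rintro ⟨hp1, hpn, hpc, hpw⟩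
      have hpltn : p < n := hclt p hp1 hpn hpc
      obtain ⟨i, ⟨hi1, hin, hSAi⟩, -⟩ := hSAbij (p + 1) (by omega) (by omega)
      have hBWTi : BWT i = c := by
        have h2 := hBWT2 i hi1 hin (by omega)
        rw [hSAi, show p + 1 - 2 = p - 1 by omega, hpc] at h2
        exact (Option.some_injective _ h2).symm
      have hdw : T.drop (SA i - 1) < W := by
        rw [hSAi, Nat.add_sub_cancel]; exact hpw
      exact ⟨i, ⟨hi1, (hkey i hi1 hin).1 hdw, hBWTi⟩, by omega⟩
    · rintro ⟨j, hjB, rfl⟩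
      obtain ⟨hjn, hS2, hSn⟩ := hBfacts j hjB
      obtain ⟨hj1, hjL, hjc⟩ := hjB
      have hTc : T[SA j - 1 - 1]? = some c := by
        have := hBWT2 j hj1 hjn (by omega)
        rw [hjc] at this
        rw [show SA j - 1 - 1 = SA j - 2 by omega]
        exact this
      exact ⟨by omega, by omega, hTc, (hkey j hj1 hjn).2 hjL⟩
  -- injectivity of (SA · - 1) on B
  have hBinj : Set.InjOn (fun j => SA j - 1) B := by
    intro j1 h1 j2 h2 he
    obtain ⟨hn1, hS1, hSn1⟩ := hBfacts j1 h1
    obtain ⟨hn2, hS2, hSn2⟩ := hBfacts j2 h2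
    exact hSAinj j1 j2 h1.1 hn1 h2.1 hn2 (by simp only at he; omega)
  -- P = SA '' F
  have hPF : P = SA '' F := by
    ext p
    simp only [Set.mem_image, hP, hF, Set.mem_setOf_eq]
    constructor
    · rintro ⟨hp1, hpn, hplt⟩
      obtain ⟨i, ⟨hi1, hin, hSAi⟩, -⟩ := hSAbij p hp1 hpn
      exact ⟨i, ⟨hi1, hin, by rw [hSAi]; exact hplt⟩, hSAi⟩
    · rintro ⟨i, ⟨hi1, hin, hlt⟩, rfl⟩
      obtain ⟨h1, h2⟩ := hSAin i hi1 hin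
      exact ⟨h1, h2, hlt⟩
  have hFinj : Set.InjOn SA F := by
    intro i h1 j h2 he
    exact hSAinj i j h1.1 h1.2.1 h2.1 h2.2.1 he
  -- P = A ∪ Q
  have hPAQ : P = A ∪ Q := by
    ext p
    simp only [Set.mem_union, hP, hA, hQ, Set.mem_setOf_eq, hn]
    constructor
    · rintro ⟨hp1, hpn, hplt⟩
      have hd := hdropcons p hp1 hpn
      rw [hd, cons_lt_iff'] at hplt
      have hsome : T[p-1]? = some (T[p-1]'(hidx p hp1 hpn)) :=
        List.getElem?_eq_getElem _
      rcases hplt with h | ⟨he, h⟩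
      · exact Or.inl ⟨hp1, hpn, _, hsome, h⟩
      · exact Or.inr ⟨hp1, hpn, by rw [hsome, he], h⟩
    · rintro (⟨hp1, hpn, x, hx, hxc⟩ | ⟨hp1, hpn, hpc, hpw⟩)
      · refine ⟨hp1, hpn, ?_⟩
        rw [hdropcons p hp1 hpn, cons_lt_iff']
        have hsome : T[p-1]? = some (T[p-1]'(hidx p hp1 hpn)) :=
          List.getElem?_eq_getElem _
        rw [hsome] at hx
        exact Or.inl ((Option.some_injective _ hx) ▸ hxc)
      · refine ⟨hp1, hpn, ?_⟩
        rw [hdropcons p hp1 hpn, cons_lt_iff']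
        have hsome : T[p-1]? = some (T[p-1]'(hidx p hp1 hpn)) :=
          List.getElem?_eq_getElem _
        rw [hsome] at hpc
        exact Or.inr ⟨(Option.some_injective _ hpc), hpw⟩
  -- disjointness of A and Q
  have hdisj : Disjoint A Q := by
    rw [Set.disjoint_left]
    rintro p ⟨hp1, hpn, x, hx, hxc⟩ ⟨-, -, hpc, -⟩
    rw [hpc] at hx
    exact absurd ((Option.some_injective _ hx) ▸ hxc) (lt_irrefl c)
  -- finiteness
  have hAfin : A.Finite := hfin A (fun p hp => Set.mem_Icc.2 ⟨hp.1, hn ▸ hp.2.1⟩)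
  have hQfin : Q.Finite := hfin Q (fun p hp => Set.mem_Icc.2 ⟨hp.1, hp.2.1⟩)
  -- put it together
  have e1 : F.ncard = P.ncard := by
    rw [hPF, Set.ncard_image_of_injOn hFinj]
  have e2 : P.ncard = A.ncard + Q.ncard := by
    rw [hPAQ, Set.ncard_union_eq hdisj hAfin hQfin]
  have e3 : Q.ncard = B.ncard := by
    rw [hQB, Set.ncard_image_of_injOn hBinj]
  have e4 : Cval T c = 1 + A.ncard := rfl
  have e5 : rankC BWT c L = B.ncard := rfl
  rw [e1, e2, e3, e4, e5]
  omega
end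

section
/- Let C be a collection of #-terminated strings with generalized suffix array and LCP array. If W is a right-maximal string of C with sorted right-extension characters c₁ < ... < c_t (t ≥ 2), then for every 2 ≤ i ≤ t, LCP[left(W·c_i)] = |W|. -/
private lemma lcpLen_append {α : Type*} [DecidableEq α] (W u v : List α) :
    lcpLen (W ++ u) (W ++ v) = W.length + lcpLen u v := by
  induction W with
  | nil => simp [lcpLen]
  | cons a W ih => simp [lcpLen, ih]; omega

private lemma lex_append {α : Type*} [LinearOrder α] (W : List α) {u v : List α}
    (h : List.Lex (· < ·) u v) : List.Lex (· < ·) (W ++ u) (W ++ v) := by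
  induction W with
  | nil => exact h
  | cons a W ih => exact List.Lex.cons ih

private lemma sandwich {α : Type*} [LinearOrder α] (W : List α) {x z y : List α}
    (hx : W ++ x ≤ y) (hz : y ≤ W ++ z) : W <+: y := by
  induction W generalizing y with
  | nil => exact List.nil_prefix
  | cons a W ih =>
    cases y with
    | nil =>
      rcases le_iff_lt_or_eq.mp hx with h | h
      · exact absurd h (List.not_lt_nil _)
      · simp at h
    | cons d y' =>
      have had : a ≤ d := by
        rcases le_iff_lt_or_eq.mp hx with h | h
        · exact List.head_le_of_lt h
        · injection h with h1 _; exact le_of_eq h1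
      have hda : d ≤ a := by
        rcases le_iff_lt_or_eq.mp hz with h | h
        · exact List.head_le_of_lt h
        · injection h with h1 _; exact le_of_eq h1
      have hda' : d = a := le_antisymm hda had
      subst hda'
      have hx' : W ++ x ≤ y' := by
        rcases le_iff_lt_or_eq.mp hx with h | h
        · exact le_of_lt (List.lex_cons_iff.mp h)
        · injection h with _ h2; exact le_of_eq h2
      have hz' : y' ≤ W ++ z := by
        rcases le_iff_lt_or_eq.mp hz with h | h
        · exact le_of_lt (List.lex_cons_iff.mp h)
        · injection h with _ h2; exact le_of_eq h2
      exact List.cons_prefix_cons.mpr ⟨rfl, ih hx' hz'⟩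

/-- Let `C` be a collection of `#`-terminated strings with generalized
suffix array `S` and `LCP[i] = lcpLen (S (i-1)) (S i)`. If `W` is right-maximal in `C`
and `c` is any right-extension character of `W` other than the smallest (i.e. there is
`b < c` with `Wb` occurring in `C`), then at the first position `p` of `range(W·c)` we
have `LCP[p] = |W|`. -/
theorem node_type_lcp_values {α : Type*} [LinearOrder α]
    (m : ℕ) (C : Fin m → List α) (hash : α) (n : ℕ)
    (hCne : ∀ j, C j ≠ [])
    (hlast : ∀ j, (C j).getLast (hCne j) = hash)
    (honce : ∀ j, hash ∉ (C j).dropLast)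
    (hmin : ∀ a : α, a ≠ hash → hash < a)
    (hn : n = ∑ j, (C j).length)
    (S : ℕ → List α) (pos : Fin m → ℕ → ℕ)
    (hpos : ∀ j k, 1 ≤ k → k ≤ (C j).length →
      1 ≤ pos j k ∧ pos j k ≤ n ∧ S (pos j k) = (C j).drop (k - 1))
    (hpossurj : ∀ i, 1 ≤ i → i ≤ n → ∃ j k, 1 ≤ k ∧ k ≤ (C j).length ∧ pos j k = i)
    (hsorted : ∀ i j, 1 ≤ i → i ≤ j → j ≤ n → S i ≤ S j)
    (W : List α)
    (hrm : ∃ a b : α, a ≠ b ∧ (∃ j, (W ++ [a]) <:+: C j) ∧ (∃ j, (W ++ [b]) <:+: C j))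
    (c : α) (hcocc : ∃ j, (W ++ [c]) <:+: C j)
    (hnotmin : ∃ b, b < c ∧ ∃ j, (W ++ [b]) <:+: C j) :
    ∀ p, 1 ≤ p → p ≤ n → (W ++ [c]) <+: S p →
      (∀ j, 1 ≤ j → j < p → ¬(W ++ [c]) <+: S j) →
      lcpLen (S (p - 1)) (S p) = W.length := by
  intro p hp1 hpn hpre hfirst
  -- get an occurrence of W ++ [b] as a suffix in the array
  obtain ⟨b, hbc, j, hinf⟩ := hnotmin
  obtain ⟨s, t, hst⟩ := hinf
  have hlenC : (C j).length = s.length + (W.length + 1) + t.length := by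
    rw [← hst]; simp; omega
  have hk1 : 1 ≤ s.length + 1 := Nat.le_add_left 1 _
  have hk2 : s.length + 1 ≤ (C j).length := by omega
  obtain ⟨hq1, hqn, hSq⟩ := hpos j (s.length + 1) hk1 hk2
  set q := pos j (s.length + 1) with hqdef
  have hSq' : S q = W ++ b :: t := by
    rw [hSq]
    have hd : (C j).drop (s.length + 1 - 1) = (W ++ [b]) ++ t := by
      rw [← hst, Nat.add_sub_cancel]
      rw [List.append_assoc, List.drop_left]
    rw [hd]; simp
  -- S p = W ++ c :: u
  obtain ⟨u, hu⟩ := hpre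
  have hSp : S p = W ++ c :: u := by rw [← hu]; simp
  -- S q < S p
  have hlt : S q < S p := by
    rw [hSq', hSp]
    exact lex_append W (List.Lex.rel hbc)
  have hqp : q < p := by
    by_contra h
    push_neg at h
    exact absurd (hsorted p q hp1 h hqn) (not_le.mpr hlt)
  have hp2 : 2 ≤ p := by omega
  have h1 : S q ≤ S (p - 1) := hsorted q (p - 1) hq1 (by omega) (by omega)
  have h2 : S (p - 1) ≤ S p := hsorted (p - 1) p (by omega) (by omega) hpn
  rw [hSq'] at h1
  rw [hSp] at h2
  obtain ⟨r, hr⟩ := sandwich W h1 h2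
  have hnc : ¬ (W ++ [c]) <+: S (p - 1) := hfirst (p - 1) (by omega) (by omega)
  cases r with
  | nil =>
    rw [← hr, hSp]
    simpa [lcpLen] using lcpLen_append W [] (c :: u)
  | cons d r' =>
    have hdc : d ≠ c := by
      intro h
      subst h
      exact hnc (by rw [← hr]; exact ⟨r', by simp⟩)
    rw [← hr, hSp, lcpLen_append W (d :: r') (c :: u)]
    simp [lcpLen, hdc]
end

section
/- Let C be a collection of #-terminated strings with LCP array. Every node-type LCP entry arises as follows: if i > 1 and the suffixes at GSA positions i−1 and i are distinct strings with LCP[i] = ℓ, and both suffixes have length ≥ ℓ + 1, then the common prefix W of length ℓ is right-maximal, and i = left(W·b) where b is the (ℓ+1)-th character of the suffix at position i. -/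
lemma lcp_spec {α : Type*} [DecidableEq α] :
    ∀ (x y : List α) (ℓ : ℕ), lcpLen x y = ℓ → ℓ + 1 ≤ x.length → ℓ + 1 ≤ y.length →
      x.take ℓ = y.take ℓ ∧ ∃ a b, x[ℓ]? = some a ∧ y[ℓ]? = some b ∧ a ≠ b
  | [], y, ℓ, h, h1, h2 => by simp at h1
  | a :: as, [], ℓ, h, h1, h2 => by simp at h2
  | a :: as, b :: bs, ℓ, h, h1, h2 => by
    by_cases hab : a = b
    · subst hab
      unfold lcpLen at h
      rw [if_pos rfl] at h
      obtain ⟨k, rfl⟩ : ∃ k, ℓ = k + 1 := ⟨lcpLen as bs, h.symm⟩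
      simp only [List.length_cons] at h1 h2
      obtain ⟨ht, ha, hb, hga, hgb, hne⟩ := lcp_spec as bs k (by omega) (by omega) (by omega)
      exact ⟨by simp [ht], ha, hb, by simpa using hga, by simpa using hgb, hne⟩
    · simp only [lcpLen, if_neg hab] at h
      subst h
      exact ⟨rfl, a, b, by simp, by simp, hab⟩

lemma lex_head_le {α : Type*} [LinearOrder α] (x : List α) (c d : α) (t s : List α)
    (h : x ++ c :: t ≤ x ++ d :: s) : c ≤ d := by
  by_contra hcd
  push_neg at hcd
  have : x ++ d :: s < x ++ c :: t := by
    show List.Lex (· < ·) _ _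
    exact List.Lex.append_left _ (List.Lex.rel hcd) x
  exact absurd h (not_le.2 this)

/-- Converse to the previous statement: every node-type LCP entry arises
from a right-maximal string. Let `C` be a collection of `#`-terminated strings with
generalized suffix array `S`. If `i > 1`, the suffixes at positions `i-1` and `i` are
distinct with `LCP[i] = ℓ` and both have length `≥ ℓ + 1`, then their common prefix `W`
of length `ℓ` is right-maximal in `C`, and `i` is the first position of `range(W·b)`
where `b` is the `(ℓ+1)`-th character of the suffix at position `i`. -/
theorem node_type_lcp_converse {α : Type*} [LinearOrder α]
    (m : ℕ) (C : Fin m → List α) (hash : α) (n : ℕ)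
    (hCne : ∀ j, C j ≠ [])
    (hlast : ∀ j, (C j).getLast (hCne j) = hash)
    (honce : ∀ j, hash ∉ (C j).dropLast)
    (hmin : ∀ a : α, a ≠ hash → hash < a)
    (hn : n = ∑ j, (C j).length)
    (S : ℕ → List α) (pos : Fin m → ℕ → ℕ)
    (hpos : ∀ j k, 1 ≤ k → k ≤ (C j).length →
      1 ≤ pos j k ∧ pos j k ≤ n ∧ S (pos j k) = (C j).drop (k - 1))
    (hpossurj : ∀ i, 1 ≤ i → i ≤ n → ∃ j k, 1 ≤ k ∧ k ≤ (C j).length ∧ pos j k = i)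
    (hsorted : ∀ i j, 1 ≤ i → i ≤ j → j ≤ n → S i ≤ S j)
    (i ℓ : ℕ) (hi1 : 1 < i) (hin : i ≤ n)
    (hne' : S (i - 1) ≠ S i)
    (hlcp : lcpLen (S (i - 1)) (S i) = ℓ)
    (hlen1 : ℓ + 1 ≤ (S (i - 1)).length) (hlen2 : ℓ + 1 ≤ (S i).length) :
    (∃ a b : α, a ≠ b ∧ (∃ j, ((S i).take ℓ ++ [a]) <:+: C j) ∧
      (∃ j, ((S i).take ℓ ++ [b]) <:+: C j)) ∧
    (∃ b : α, (S i)[ℓ]? = some b ∧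
      ((S i).take ℓ ++ [b]) <+: S i ∧
      (∀ j, 1 ≤ j → j < i → ¬((S i).take ℓ ++ [b]) <+: S j)) := by
  obtain ⟨htake, a, b, hga, hgb, hab⟩ := lcp_spec _ _ ℓ hlcp hlen1 hlen2
  -- take (ℓ+1) facts
  have hprefb : (S i).take ℓ ++ [b] <+: S i := by
    have : (S i).take ℓ ++ [b] = (S i).take (ℓ + 1) := by
      rw [List.take_succ, hgb]; rfl
    rw [this]; exact List.take_prefix _ _
  have hprefa : (S i).take ℓ ++ [a] <+: S (i - 1) := by
    have : (S i).take ℓ ++ [a] = (S (i - 1)).take (ℓ + 1) := by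
      rw [List.take_succ, hga, ← htake]; rfl
    rw [this]; exact List.take_prefix _ _
  -- suffix → infix of some C j
  have hsuffC : ∀ p, 1 ≤ p → p ≤ n → ∃ j, S p <:+ C j := by
    intro p hp1 hpn
    obtain ⟨j, k, hk1, hk2, hpk⟩ := hpossurj p hp1 hpn
    obtain ⟨_, _, hS⟩ := hpos j k hk1 hk2
    exact ⟨j, by rw [← hpk, hS]; exact List.drop_suffix _ _⟩
  have hin1 : 1 ≤ i - 1 := by omega
  have hinn : i - 1 ≤ n := by omega
  refine ⟨⟨a, b, hab, ?_, ?_⟩, b, hgb, hprefb, ?_⟩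
  · obtain ⟨j, hsuf⟩ := hsuffC (i - 1) hin1 hinn
    exact ⟨j, hprefa.isInfix.trans hsuf.isInfix⟩
  · obtain ⟨j, hsuf⟩ := hsuffC i (by omega) hin
    exact ⟨j, hprefb.isInfix.trans hsuf.isInfix⟩
  · intro j hj1 hji hpref
    -- S j ≤ S (i-1) ≤ S i, with prefixes W++[b], W++[a], W++[b]
    have h1 : S j ≤ S (i - 1) := hsorted j (i - 1) hj1 (by omega) hinn
    have h2 : S (i - 1) ≤ S i := hsorted (i - 1) i hin1 (by omega) hin
    obtain ⟨t1, ht1⟩ := hpref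
    obtain ⟨t2, ht2⟩ := hprefa
    obtain ⟨t3, ht3⟩ := hprefb
    rw [← ht1, ← ht2] at h1
    rw [← ht3, ← ht2] at h2
    simp only [List.append_assoc, List.singleton_append] at h1 h2
    have hba : b ≤ a := lex_head_le _ _ _ _ _ h1
    have hab' : a ≤ b := lex_head_le _ _ _ _ _ h2
    exact hab (le_antisymm hab' hba)
end
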